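/- arXiv:2405.09248 — 9 statements merged into one kernel-verified Lean document; each statement's English description precedes it below -/
import Mathlib

section
/- Let n ≥ 1, let A and B be n×n real symmetric positive definite matrices, and let t ∈ [0,1]. Then ((1−t)·A⁻¹ + t·B⁻¹)⁻¹ ≤ (1−t)·A + t·B in the Loewner order, i.e. the matrix (1−t)·A + t·B − ((1−t)·A⁻¹ + t·B⁻¹)⁻¹ is positive semidefinite. -/
/-!
For positive definite `M` the block matrix `[M 1; 1 M⁻¹]` is positive semidefinite, its Schur
complement `M⁻¹ - M⁻¹` being zero. A convex combination of two such block matrices is the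
positive semidefinite matrix `[a A + b B, 1; 1, a A⁻¹ + b B⁻¹]`, and its Schur complement with
respect to the lower right block is `a A + b B - (a A⁻¹ + b B⁻¹)⁻¹`.
-/

open scoped ComplexOrder MatrixOrder

namespace Matrix

variable {n 𝕜 : Type*} [RCLike 𝕜]

theorem PosDef.smul_add_smul {A B : Matrix n n 𝕜} (hA : A.PosDef) (hB : B.PosDef) {a b : ℝ}
    (ha : 0 ≤ a) (hb : 0 ≤ b) (hab : a + b = 1) : (a • A + b • B).PosDef := by
  rcases ha.eq_or_lt with rfl | ha
  · rw [zero_add] at hab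
    simpa [hab] using hB
  · exact (hA.smul ha).add_posSemidef (hB.posSemidef.smul hb)

variable [Fintype n] [DecidableEq n]

theorem PosDef.posSemidef_fromBlocks_one_inv {M : Matrix n n 𝕜} (hM : M.PosDef) :
    (fromBlocks M 1 1 M⁻¹).PosSemidef := by
  have := hM.isUnit.invertible
  simpa using (PosDef.fromBlocks₁₁ 1 M⁻¹ hM).mpr (by simpa using PosSemidef.zero)

theorem PosDef.inv_smul_add_smul_inv_le {A B : Matrix n n 𝕜} (hA : A.PosDef) (hB : B.PosDef)
    {a b : ℝ} (ha : 0 ≤ a) (hb : 0 ≤ b) (hab : a + b = 1) :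
    (a • A⁻¹ + b • B⁻¹)⁻¹ ≤ a • A + b • B := by
  have hH := hA.inv.smul_add_smul hB.inv ha hb hab
  have := hH.isUnit.invertible
  have hblock : (fromBlocks (a • A + b • B) 1 1 (a • A⁻¹ + b • B⁻¹)).PosSemidef := by
    convert (hA.posSemidef_fromBlocks_one_inv.smul ha).add
      (hB.posSemidef_fromBlocks_one_inv.smul hb) using 1
    rw [fromBlocks_smul, fromBlocks_smul, fromBlocks_add, ← add_smul, hab, one_smul]
  rw [le_iff]
  simpa using (PosDef.fromBlocks₂₂ (a • A + b • B) 1 hH).mp (by simpa using hblock)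

end Matrix

theorem stmt0_general (n : ℕ) (A B : Matrix (Fin n) (Fin n) ℝ)
    (hA : A.PosDef) (hB : B.PosDef) (t : ℝ) (ht : t ∈ Set.Icc (0 : ℝ) 1) :
    ((1 - t) • A + t • B - ((1 - t) • A⁻¹ + t • B⁻¹)⁻¹).PosSemidef :=
  Matrix.le_iff.mp <|
    hA.inv_smul_add_smul_inv_le hB (sub_nonneg.mpr ht.2) ht.1 (sub_add_cancel 1 t)

/-- AM-HM inequality for positive definite matrices (Proposition 1.5):
the harmonic mean `((1-t)·A⁻¹ + t·B⁻¹)⁻¹` is dominated in the Loewner order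
by the arithmetic mean `(1-t)·A + t·B`. -/
theorem stmt0 (n : ℕ) (hn : 1 ≤ n) (A B : Matrix (Fin n) (Fin n) ℝ)
    (hA : A.PosDef) (hB : B.PosDef) (t : ℝ) (ht : t ∈ Set.Icc (0 : ℝ) 1) :
    ((1 - t) • A + t • B - ((1 - t) • A⁻¹ + t • B⁻¹)⁻¹).PosSemidef :=
  stmt0_general n A B hA hB t ht
end

section
/- Let n ≥ 1, let A and B be n×n real symmetric positive definite matrices, and let t ∈ (0,1). Then for every z ∈ ℝⁿ, ⟨z, ((1−t)·A⁻¹ + t·B⁻¹)⁻¹ z⟩ = inf { ⟨x, Ax⟩/(1−t) + ⟨y, By⟩/t : x, y ∈ ℝⁿ, x + y = z }, and the infimum is attained exactly at x = (1−t)·(t·A + (1−t)·B)⁻¹ B z (with y = z − x). -/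
/-!
Put `M = t A + (1 - t) B`. Since `(1 - t) A⁻¹ + t B⁻¹ = A⁻¹ M B⁻¹`, the harmonic mean is
`H = B M⁻¹ A`, which also equals `A M⁻¹ B`. The candidate split `x₀ = (1 - t) M⁻¹ B z`,
`y₀ = t M⁻¹ A z` of `z` therefore satisfies the Lagrange condition
`A x₀ / (1 - t) = H z = B y₀ / t`, so every other split `(x₀ + w, y₀ - w)` costs exactly
`⟨w, A w⟩ / (1 - t) + ⟨w, B w⟩ / t` more, which is positive unless `w = 0`; and the cost of
`(x₀, y₀)` is `⟨x₀ + y₀, H z⟩ = ⟨z, H z⟩`.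
-/

namespace Matrix

variable {ι : Type*} [Fintype ι]

noncomputable def splitCost (A B : Matrix ι ι ℝ) (a b : ℝ) (x y : ι → ℝ) : ℝ :=
  x ⬝ᵥ A *ᵥ x / a + y ⬝ᵥ B *ᵥ y / b

theorem IsSymm.dotProduct_mulVec_comm {A : Matrix ι ι ℝ} (hA : A.IsSymm) (u v : ι → ℝ) :
    u ⬝ᵥ A *ᵥ v = v ⬝ᵥ A *ᵥ u := by
  rw [dotProduct_mulVec, ← mulVec_transpose, hA.eq, dotProduct_comm]

theorem splitCost_add_sub {A B : Matrix ι ι ℝ} (hA : A.IsSymm) (hB : B.IsSymm) {a b : ℝ}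
    {x₀ y₀ : ι → ℝ} (hstat : a⁻¹ • A *ᵥ x₀ = b⁻¹ • B *ᵥ y₀) (w : ι → ℝ) :
    splitCost A B a b (x₀ + w) (y₀ - w) =
      splitCost A B a b x₀ y₀ + splitCost A B a b w w := by
  -- the cross terms are `2 ⟨w, A x₀ / a - B y₀ / b⟩ = 0`
  have hcross : w ⬝ᵥ A *ᵥ x₀ / a = w ⬝ᵥ B *ᵥ y₀ / b := by
    simpa [dotProduct_smul, div_eq_inv_mul] using congrArg (w ⬝ᵥ ·) hstat
  simp only [splitCost, mulVec_add, mulVec_sub, dotProduct_add, dotProduct_sub, add_dotProduct,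
    sub_dotProduct, hA.dotProduct_mulVec_comm x₀ w, hB.dotProduct_mulVec_comm y₀ w, add_div,
    sub_div, hcross]
  ring

theorem splitCost_self_nonneg {A B : Matrix ι ι ℝ} (hA : A.PosSemidef) (hB : B.PosSemidef)
    {a b : ℝ} (ha : 0 ≤ a) (hb : 0 ≤ b) (w : ι → ℝ) : 0 ≤ splitCost A B a b w w := by
  have hAw := hA.dotProduct_mulVec_nonneg w
  have hBw := hB.dotProduct_mulVec_nonneg w
  simp only [star_trivial] at hAw hBw
  unfold splitCost
  positivity

theorem splitCost_self_pos {A B : Matrix ι ι ℝ} (hA : A.PosDef) (hB : B.PosDef)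
    {a b : ℝ} (ha : 0 < a) (hb : 0 < b) {w : ι → ℝ} (hw : w ≠ 0) :
    0 < splitCost A B a b w w := by
  have hAw := hA.dotProduct_mulVec_pos hw
  have hBw := hB.dotProduct_mulVec_pos hw
  simp only [star_trivial] at hAw hBw
  unfold splitCost
  positivity

variable [DecidableEq ι]

theorem mul_inv_smul_add_smul_mul_comm {A B : Matrix ι ι ℝ} {a b : ℝ} (ha : a ≠ 0)
    (hM : IsUnit (b • A + a • B).det) :
    A * (b • A + a • B)⁻¹ * B = B * (b • A + a • B)⁻¹ * A := by
  set M := b • A + a • B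
  have haB : a • B = M - b • A := by simp [M]
  apply smul_right_injective _ ha
  calc a • (A * M⁻¹ * B) = A * M⁻¹ * (a • B) := by rw [Matrix.mul_smul]
    _ = A - b • (A * M⁻¹ * A) := by
      rw [haB, Matrix.mul_sub, Matrix.mul_smul, mul_assoc, nonsing_inv_mul M hM, mul_one]
    _ = (M - b • A) * M⁻¹ * A := by
      rw [Matrix.sub_mul, Matrix.sub_mul, mul_nonsing_inv M hM, one_mul, Matrix.smul_mul,
        Matrix.smul_mul]
    _ = a • (B * M⁻¹ * A) := by rw [← haB, Matrix.smul_mul, Matrix.smul_mul]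

theorem inv_smul_inv_add_smul_inv {A B : Matrix ι ι ℝ} (hA : IsUnit A.det) (hB : IsUnit B.det)
    (a b : ℝ) : (a • A⁻¹ + b • B⁻¹)⁻¹ = B * (b • A + a • B)⁻¹ * A := by
  have hfactor : a • A⁻¹ + b • B⁻¹ = A⁻¹ * (b • A + a • B) * B⁻¹ := by
    rw [Matrix.mul_add, Matrix.add_mul, Matrix.mul_smul, Matrix.mul_smul, Matrix.smul_mul,
      Matrix.smul_mul, nonsing_inv_mul A hA, one_mul, mul_assoc, mul_nonsing_inv B hB, mul_one,
      add_comm]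
  rw [hfactor, mul_inv_rev, mul_inv_rev, nonsing_inv_nonsing_inv A hA,
    nonsing_inv_nonsing_inv B hB, mul_assoc]

theorem splitCost_eq_add_splitCost_sub {A B : Matrix ι ι ℝ} (hA : A.PosDef) (hB : B.PosDef)
    {a b : ℝ} (ha : 0 < a) (hb : 0 < b) {x y z : ι → ℝ} (hxy : x + y = z) :
    splitCost A B a b x y = z ⬝ᵥ (a • A⁻¹ + b • B⁻¹)⁻¹ *ᵥ z +
      splitCost A B a b (x - a • (b • A + a • B)⁻¹ *ᵥ B *ᵥ z)
        (x - a • (b • A + a • B)⁻¹ *ᵥ B *ᵥ z) := by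
  rw [inv_smul_inv_add_smul_inv ((isUnit_iff_isUnit_det A).1 hA.isUnit)
    ((isUnit_iff_isUnit_det B).1 hB.isUnit)]
  set M := b • A + a • B
  have hM : IsUnit M.det := (isUnit_iff_isUnit_det M).1 ((hA.smul hb).add (hB.smul ha)).isUnit
  set H := B * M⁻¹ * A
  set x₀ := a • M⁻¹ *ᵥ B *ᵥ z with hx₀
  set y₀ := b • M⁻¹ *ᵥ A *ᵥ z with hy₀
  have hsum : x₀ + y₀ = z := by
    calc x₀ + y₀ = M⁻¹ *ᵥ M *ᵥ z := by
          simp only [x₀, y₀, M, add_mulVec, smul_mulVec, mulVec_add, mulVec_smul, add_comm]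
      _ = z := by rw [mulVec_mulVec, nonsing_inv_mul M hM, one_mulVec]
  have hAx₀ : a⁻¹ • A *ᵥ x₀ = H *ᵥ z := by
    rw [hx₀, mulVec_smul, inv_smul_smul₀ ha.ne', mulVec_mulVec, mulVec_mulVec,
      mul_inv_smul_add_smul_mul_comm ha.ne' hM]
  have hBy₀ : b⁻¹ • B *ᵥ y₀ = H *ᵥ z := by
    rw [hy₀, mulVec_smul, inv_smul_smul₀ hb.ne', mulVec_mulVec, mulVec_mulVec]
  have hval : splitCost A B a b x₀ y₀ = z ⬝ᵥ H *ᵥ z := by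
    calc splitCost A B a b x₀ y₀ = x₀ ⬝ᵥ a⁻¹ • A *ᵥ x₀ + y₀ ⬝ᵥ b⁻¹ • B *ᵥ y₀ := by
          simp only [splitCost, dotProduct_smul, smul_eq_mul, inv_mul_eq_div]
      _ = z ⬝ᵥ H *ᵥ z := by rw [hAx₀, hBy₀, ← add_dotProduct, hsum]
  have hy : y₀ - (x - x₀) = y := by rw [← hxy] at hsum; linear_combination hsum
  simpa [hy, hval] using splitCost_add_sub (isHermitian_iff_isSymm.1 hA.isHermitian)
    (isHermitian_iff_isSymm.1 hB.isHermitian) (hAx₀.trans hBy₀.symm) (x - x₀)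

theorem isLeast_splitCost {A B : Matrix ι ι ℝ} (hA : A.PosDef) (hB : B.PosDef) {a b : ℝ}
    (ha : 0 < a) (hb : 0 < b) (z : ι → ℝ) :
    IsLeast {v | ∃ x y, x + y = z ∧ v = splitCost A B a b x y}
      (z ⬝ᵥ (a • A⁻¹ + b • B⁻¹)⁻¹ *ᵥ z) ∧
    ∀ x y, x + y = z → splitCost A B a b x y = z ⬝ᵥ (a • A⁻¹ + b • B⁻¹)⁻¹ *ᵥ z →
      x = a • (b • A + a • B)⁻¹ *ᵥ B *ᵥ z := by
  set x₀ := a • (b • A + a • B)⁻¹ *ᵥ B *ᵥ z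
  refine ⟨⟨⟨x₀, z - x₀, add_sub_cancel x₀ z, ?_⟩, ?_⟩, ?_⟩
  · rw [splitCost_eq_add_splitCost_sub hA hB ha hb (add_sub_cancel x₀ z), sub_self]
    simp [splitCost]
  · rintro v ⟨x, y, hxy, rfl⟩
    rw [splitCost_eq_add_splitCost_sub hA hB ha hb hxy]
    exact le_add_of_nonneg_right (splitCost_self_nonneg hA.posSemidef hB.posSemidef ha.le hb.le _)
  · intro x y hxy hmin
    rw [splitCost_eq_add_splitCost_sub hA hB ha hb hxy, add_eq_left] at hmin
    by_contra hne
    exact (splitCost_self_pos hA hB ha hb (sub_ne_zero.2 hne)).ne' hmin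

end Matrix

theorem stmt1_general (n : ℕ) (A B : Matrix (Fin n) (Fin n) ℝ)
    (hA : A.PosDef) (hB : B.PosDef) (t : ℝ) (ht : t ∈ Set.Ioo (0 : ℝ) 1)
    (z : Fin n → ℝ) :
    IsLeast {v : ℝ | ∃ x y : Fin n → ℝ, x + y = z ∧
        v = x ⬝ᵥ A.mulVec x / (1 - t) + y ⬝ᵥ B.mulVec y / t}
      (z ⬝ᵥ (((1 - t) • A⁻¹ + t • B⁻¹)⁻¹).mulVec z) ∧
    ∀ x y : Fin n → ℝ, x + y = z →
      x ⬝ᵥ A.mulVec x / (1 - t) + y ⬝ᵥ B.mulVec y / t =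
        z ⬝ᵥ (((1 - t) • A⁻¹ + t • B⁻¹)⁻¹).mulVec z →
      x = (1 - t) • ((t • A + (1 - t) • B)⁻¹).mulVec (B.mulVec z) :=
  Matrix.isLeast_splitCost hA hB (sub_pos.2 ht.2) ht.1 z

/-- Variational characterization of the matrix harmonic mean (Lemma 1.7):
`⟨z, ((1-t)A⁻¹ + tB⁻¹)⁻¹ z⟩ = inf { ⟨x,Ax⟩/(1-t) + ⟨y,By⟩/t : x + y = z }`,
with the infimum attained exactly at `x = (1-t)·(tA + (1-t)B)⁻¹ B z`. -/
theorem stmt1 (n : ℕ) (hn : 1 ≤ n) (A B : Matrix (Fin n) (Fin n) ℝ)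
    (hA : A.PosDef) (hB : B.PosDef) (t : ℝ) (ht : t ∈ Set.Ioo (0 : ℝ) 1)
    (z : Fin n → ℝ) :
    IsLeast {v : ℝ | ∃ x y : Fin n → ℝ, x + y = z ∧
        v = x ⬝ᵥ A.mulVec x / (1 - t) + y ⬝ᵥ B.mulVec y / t}
      (z ⬝ᵥ (((1 - t) • A⁻¹ + t • B⁻¹)⁻¹).mulVec z) ∧
    ∀ x y : Fin n → ℝ, x + y = z →
      x ⬝ᵥ A.mulVec x / (1 - t) + y ⬝ᵥ B.mulVec y / t =
        z ⬝ᵥ (((1 - t) • A⁻¹ + t • B⁻¹)⁻¹).mulVec z →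
      x = (1 - t) • ((t • A + (1 - t) • B)⁻¹).mulVec (B.mulVec z) :=
  stmt1_general n A B hA hB t ht z
end

section
/- Let n ≥ 1, let A = (a_{mk}) and B = (b_{mk}) be n×n real symmetric positive definite matrices, let t ∈ (0,1), and let l₁,…,lₙ and r₁,…,rₙ be positive real numbers. Define the positive definite matrices Ã = (a_{mk} l_m l_k) and B̃ = (b_{mk} r_m r_k), and for each i set s_i = ((1−t)/l_i + t/r_i)⁻¹ (the weighted harmonic mean of l_i and r_i). Then ((1−t)·Ã⁻¹ + t·B̃⁻¹)⁻¹ ≤ C in the Loewner order, where C is the matrix with entries C_{mk} = ((1−t)a_{mk} + t b_{mk}) s_m s_k. -/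
/-!
For `P` positive definite the block matrix `[[P⁻¹, X], [Xᴴ, Xᴴ P X]]` is positive semidefinite,
its Schur complement being zero. If `(1 - t) X + t Y = 1`, the convex combination of the blocks
built from `(P, X)` and `(Q, Y)` has off-diagonal block `1`, so its Schur complement
`(1 - t) Xᴴ P X + t Yᴴ Q Y - ((1 - t) P⁻¹ + t Q⁻¹)⁻¹` is positive semidefinite. With `P = Ã`,
`Q = B̃`, `X = diag (s_i / l_i)` and `Y = diag (s_i / r_i)`, the first two terms add up to `C`.
-/

open Matrix
open scoped MatrixOrder ComplexOrder

namespace Matrix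

variable {𝕜 ι : Type*} [RCLike 𝕜] [Fintype ι] [DecidableEq ι]

theorem PosDef.posSemidef_fromBlocks_inv {κ : Type*} [Fintype κ] {P : Matrix ι ι 𝕜}
    (hP : P.PosDef) (X : Matrix ι κ 𝕜) : (fromBlocks P⁻¹ X Xᴴ (Xᴴ * P * X)).PosSemidef := by
  have := hP.inv.isUnit.invertible
  rw [hP.inv.fromBlocks₁₁, nonsing_inv_nonsing_inv P ((isUnit_iff_isUnit_det P).mp hP.isUnit),
    sub_self]
  exact .zero

theorem PosDef.inv_smul_inv_add_smul_inv_le {P Q X Y : Matrix ι ι 𝕜} (hP : P.PosDef)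
    (hQ : Q.PosDef) {a b : ℝ} (ha : 0 < a) (hb : 0 < b) (hXY : a • X + b • Y = 1) :
    (a • P⁻¹ + b • Q⁻¹)⁻¹ ≤ a • (Xᴴ * P * X) + b • (Yᴴ * Q * Y) := by
  have hH : (a • P⁻¹ + b • Q⁻¹).PosDef := (hP.inv.smul ha).add (hQ.inv.smul hb)
  have := hH.isUnit.invertible
  have hblocks : fromBlocks (a • P⁻¹ + b • Q⁻¹) 1 1ᴴ (a • (Xᴴ * P * X) + b • (Yᴴ * Q * Y)) =
      a • fromBlocks P⁻¹ X Xᴴ (Xᴴ * P * X) + b • fromBlocks Q⁻¹ Y Yᴴ (Yᴴ * Q * Y) := by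
    simp only [fromBlocks_smul, fromBlocks_add, ← hXY, conjTranspose_add, conjTranspose_smul,
      star_trivial]
  have hpsd := ((hP.posSemidef_fromBlocks_inv X).smul ha.le).add
    ((hQ.posSemidef_fromBlocks_inv Y).smul hb.le)
  rw [← hblocks, hH.fromBlocks₁₁, conjTranspose_one, Matrix.one_mul, Matrix.mul_one] at hpsd
  exact hpsd

theorem PosDef.rescale {A : Matrix ι ι ℝ} (hA : A.PosDef) {d : ι → ℝ} (hd : ∀ i, d i ≠ 0) :
    (of fun i j => A i j * d i * d j).PosDef := by
  have hD : Function.Injective (diagonal d).mulVec := mulVec_injective_iff_isUnit.mpr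
    (isUnit_diagonal.mpr (Pi.isUnit_iff.mpr fun i => (hd i).isUnit))
  convert hA.conjTranspose_mul_mul_same hD using 1
  ext i j
  simp only [diagonal_conjTranspose, star_trivial, mul_diagonal, diagonal_mul, of_apply]
  ring

end Matrix

theorem stmt3_general (n : ℕ) (A B : Matrix (Fin n) (Fin n) ℝ)
    (hA : A.PosDef) (hB : B.PosDef) (t : ℝ) (ht : t ∈ Set.Ioo (0 : ℝ) 1)
    (l r : Fin n → ℝ) (hl : ∀ i, 0 < l i) (hr : ∀ i, 0 < r i) :
    ((Matrix.of fun m k : Fin n => ((1 - t) * A m k + t * B m k) *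
          ((1 - t) / l m + t / r m)⁻¹ * ((1 - t) / l k + t / r k)⁻¹) -
        ((1 - t) • (Matrix.of fun m k : Fin n => A m k * l m * l k)⁻¹ +
          t • (Matrix.of fun m k : Fin n => B m k * r m * r k)⁻¹)⁻¹).PosSemidef := by
  obtain ⟨ht0, ht1⟩ := ht
  have hmean : ∀ i, 0 < (1 - t) / l i + t / r i := fun i =>
    add_pos (div_pos (sub_pos.mpr ht1) (hl i)) (div_pos ht0 (hr i))
  set s : Fin n → ℝ := fun i => ((1 - t) / l i + t / r i)⁻¹
  set X := diagonal fun i => s i / l i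
  set Y := diagonal fun i => s i / r i
  have hXY : (1 - t) • X + t • Y = 1 := by
    rw [← diagonal_smul, ← diagonal_smul, diagonal_add, ← diagonal_one]
    congr 1
    ext i
    calc (1 - t) * (s i / l i) + t * (s i / r i) = s i * ((1 - t) / l i + t / r i) := by ring
      _ = 1 := inv_mul_cancel₀ (hmean i).ne'
  have hC : (of fun m k => ((1 - t) * A m k + t * B m k) * s m * s k) =
      (1 - t) • (Xᴴ * (of fun m k => A m k * l m * l k) * X) +
        t • (Yᴴ * (of fun m k => B m k * r m * r k) * Y) := by
    ext m k
    simp only [X, Y, diagonal_conjTranspose, star_trivial, mul_diagonal, diagonal_mul, of_apply,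
      Matrix.add_apply, Matrix.smul_apply, smul_eq_mul]
    field_simp [(hl m).ne', (hl k).ne', (hr m).ne', (hr k).ne']
  rw [hC]
  exact (hA.rescale fun i => (hl i).ne').inv_smul_inv_add_smul_inv_le
    (hB.rescale fun i => (hr i).ne') (sub_pos.mpr ht1) ht0 hXY

/-- Weighted AM-HM inequality for positive definite matrices (Proposition 1.6):
with `Ã = (a_{mk} l_m l_k)`, `B̃ = (b_{mk} r_m r_k)` and `s_i` the weighted harmonic
mean of `l_i` and `r_i`, one has `((1-t)Ã⁻¹ + tB̃⁻¹)⁻¹ ≤ (((1-t)a_{mk}+t b_{mk}) s_m s_k)`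
in the Loewner order. -/
theorem stmt3 (n : ℕ) (hn : 1 ≤ n) (A B : Matrix (Fin n) (Fin n) ℝ)
    (hA : A.PosDef) (hB : B.PosDef) (t : ℝ) (ht : t ∈ Set.Ioo (0 : ℝ) 1)
    (l r : Fin n → ℝ) (hl : ∀ i, 0 < l i) (hr : ∀ i, 0 < r i) :
    ((Matrix.of fun m k : Fin n => ((1 - t) * A m k + t * B m k) *
          ((1 - t) / l m + t / r m)⁻¹ * ((1 - t) / l k + t / r k)⁻¹) -
        ((1 - t) • (Matrix.of fun m k : Fin n => A m k * l m * l k)⁻¹ +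
          t • (Matrix.of fun m k : Fin n => B m k * r m * r k)⁻¹)⁻¹).PosSemidef :=
  stmt3_general n A B hA hB t ht l r hl hr
end

section
/- Let U ⊆ ℝⁿ be an open convex set and let f : U → ℝ be a convex function which is differentiable at every point of U. Let a, b ∈ U and suppose f is affine on the segment [a,b], i.e. f((1−λ)a + λb) = (1−λ)f(a) + λf(b) for all λ ∈ [0,1]. Then the derivatives of f at a and b coincide: ∇f(a) = ∇f(b). -/
/-!
Let `ℓ` be the tangent affine function of `f` at `a`. Convexity gives `f - ℓ ≥ 0` on `U`, and
since `f` is affine on `[a, b]` its slope there is `f'(a)(b - a)`, so `f - ℓ` vanishes at `b`.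
Thus `b` is an interior minimum of `f - ℓ`, whence `f'(b) = f'(a)`.
-/

open Set AffineMap Topology

variable {E : Type*} [NormedAddCommGroup E] [NormedSpace ℝ E] {f : E → ℝ} {f' : E →L[ℝ] ℝ}
  {s : Set E} {a b x : E}

theorem HasFDerivAt.hasDerivAt_comp_lineMap_zero (hf : HasFDerivAt f f' a) (b : E) :
    HasDerivAt (fun t : ℝ => f (lineMap a b t)) (f' (b - a)) 0 := by
  rw [← lineMap_apply_zero (k := ℝ) a b] at hf
  exact hf.comp_hasDerivAt 0 hasDerivAt_lineMap

theorem ConvexOn.add_apply_sub_le_of_hasFDerivAt (hf : ConvexOn ℝ s f) (ha : a ∈ s) (hx : x ∈ s)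
    (hf' : HasFDerivAt f f' a) : f a + f' (x - a) ≤ f x := by
  have hline : ConvexOn ℝ (lineMap a x ⁻¹' s) (fun t : ℝ => f (lineMap a x t)) :=
    hf.comp_affineMap (lineMap a x)
  have hslope := hline.le_slope_of_hasDerivAt (x := 0) (y := 1) (by simpa using ha)
    (by simpa using hx) zero_lt_one (hf'.hasDerivAt_comp_lineMap_zero x)
  rw [slope_def_field] at hslope
  simp only [lineMap_apply_zero, lineMap_apply_one, sub_zero, div_one] at hslope
  linarith

theorem HasFDerivAt.apply_sub_eq_of_affine_on_segment (hf : HasFDerivAt f f' a)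
    (haff : ∀ t ∈ Icc (0 : ℝ) 1, f ((1 - t) • a + t • b) = (1 - t) * f a + t * f b) :
    f' (b - a) = f b - f a := by
  have hsecant : HasDerivWithinAt (fun t : ℝ => f (lineMap a b t)) (f b - f a) (Icc 0 1) 0 := by
    have hlin := ((hasDerivAt_id' (0 : ℝ)).mul_const (f b - f a)).const_add (f a)
    rw [one_mul] at hlin
    refine hlin.hasDerivWithinAt.congr (fun t ht => ?_) ?_
    · rw [lineMap_apply_module, haff t ht]; ring
    · simp
  exact (uniqueDiffOn_Icc zero_lt_one 0 (left_mem_Icc.2 zero_le_one)).eq_deriv _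
    (hf.hasDerivAt_comp_lineMap_zero b).hasDerivWithinAt hsecant

theorem ConvexOn.hasFDerivAt_eq_of_affine_on_segment (hf : ConvexOn ℝ s f) (ha : a ∈ s)
    (hb : s ∈ 𝓝 b) {f'a f'b : E →L[ℝ] ℝ} (hfa : HasFDerivAt f f'a a) (hfb : HasFDerivAt f f'b b)
    (haff : ∀ t ∈ Icc (0 : ℝ) 1, f ((1 - t) • a + t • b) = (1 - t) * f a + t * f b) :
    f'a = f'b := by
  have hsecant := hfa.apply_sub_eq_of_affine_on_segment haff
  have hmin : IsLocalMin (fun x => f x - f'a x) b := by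
    filter_upwards [hb] with x hx
    have hsupport := hf.add_apply_sub_le_of_hasFDerivAt ha hx hfa
    simp only [map_sub] at hsupport hsecant ⊢
    linarith
  exact (sub_eq_zero.1 (hmin.hasFDerivAt_eq_zero (hfb.sub f'a.hasFDerivAt))).symm

theorem stmt4_general (n : ℕ) (U : Set (EuclideanSpace ℝ (Fin n))) (hUo : IsOpen U)
    (f : EuclideanSpace ℝ (Fin n) → ℝ) (hf : ConvexOn ℝ U f)
    (hdiff : ∀ x ∈ U, DifferentiableAt ℝ f x)
    (a b : EuclideanSpace ℝ (Fin n)) (ha : a ∈ U) (hb : b ∈ U)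
    (haff : ∀ l ∈ Set.Icc (0 : ℝ) 1,
      f ((1 - l) • a + l • b) = (1 - l) * f a + l * f b) :
    gradient f a = gradient f b :=
  congrArg (InnerProductSpace.toDual ℝ _).symm <|
    hf.hasFDerivAt_eq_of_affine_on_segment ha (hUo.mem_nhds hb)
      (hdiff a ha).hasFDerivAt (hdiff b hb).hasFDerivAt haff

/-- If a convex function, differentiable on an open convex set `U ⊆ ℝⁿ`, is affine on the
segment `[a,b] ⊆ U`, then its derivatives at the two endpoints coincide. -/
theorem stmt4 (n : ℕ) (U : Set (EuclideanSpace ℝ (Fin n))) (hUo : IsOpen U)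
    (hUc : Convex ℝ U) (f : EuclideanSpace ℝ (Fin n) → ℝ) (hf : ConvexOn ℝ U f)
    (hdiff : ∀ x ∈ U, DifferentiableAt ℝ f x)
    (a b : EuclideanSpace ℝ (Fin n)) (ha : a ∈ U) (hb : b ∈ U)
    (haff : ∀ l ∈ Set.Icc (0 : ℝ) 1,
      f ((1 - l) • a + l • b) = (1 - l) * f a + l * f b) :
    gradient f a = gradient f b :=
  stmt4_general n U hUo f hf hdiff a b ha hb haff
end

section
/- Let U ⊆ ℝⁿ be open and convex, and let φ₀, φ₁ : U → ℝ be twice continuously differentiable with positive definite Hessian matrices D²φ₀(x) and D²φ₁(x) at every x ∈ U. Let W ⊆ ℝⁿ × (0,1) be open, and let ξ, η : W → U be maps, differentiable in the x-variable, satisfying for all (x,t) ∈ W: (1−t)·ξ(x,t) + t·η(x,t) = x and ∇φ₀(ξ(x,t)) = ∇φ₁(η(x,t)). Then for each fixed t the map x ↦ ∇φ₀(ξ(x,t)) is differentiable in x, and its Jacobian matrix equals ((1−t)·(D²φ₀(ξ(x,t)))⁻¹ + t·(D²φ₁(η(x,t)))⁻¹)⁻¹. In particular, if u : W → ℝ is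 a function whose spatial gradient satisfies ∇ₓu(x,t) = ∇φ₀(ξ(x,t)) on W, then its spatial Hessian is D²ₓₓu(x,t) = ((1−t)·(D²φ₀(ξ(x,t)))⁻¹ + t·(D²φ₁(η(x,t)))⁻¹)⁻¹. -/
/-!
Write `M` for the Jacobian of `x ↦ ∇φ₀(ξ x) = ∇φ₁(η x)`. The chain rule, applied to both
expressions, gives `M = D²φ₀(ξ) Dξ = D²φ₁(η) Dη`, while differentiating `(1-t)ξ + tη = id` gives
`(1-t) Dξ + t Dη = 1`. Hence `((1-t) D²φ₀(ξ)⁻¹ + t D²φ₁(η)⁻¹) M = 1`, which identifies `M` as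
the inverse.
-/

/-- The gradient of `φ : ℝⁿ → ℝ` at `x`, as the vector of partial derivatives. -/
noncomputable def grad {n : ℕ} (φ : (Fin n → ℝ) → ℝ) (x : Fin n → ℝ) : Fin n → ℝ :=
  fun i => fderiv ℝ φ x (Pi.single i 1)

/-- The Jacobian matrix of a map `g : ℝⁿ → ℝⁿ` at `x`. -/
noncomputable def jacobianMatrix {n : ℕ} (g : (Fin n → ℝ) → Fin n → ℝ)
    (x : Fin n → ℝ) : Matrix (Fin n) (Fin n) ℝ :=
  Matrix.of fun i j => fderiv ℝ g x (Pi.single j 1) i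

/-- The Hessian matrix of `φ : ℝⁿ → ℝ` at `x`. -/
noncomputable def hess {n : ℕ} (φ : (Fin n → ℝ) → ℝ) (x : Fin n → ℝ) :
    Matrix (Fin n) (Fin n) ℝ :=
  jacobianMatrix (grad φ) x

open Topology Filter

theorem Matrix.eq_inv_smul_inv_add_smul_inv {ι R : Type*} [Fintype ι] [DecidableEq ι]
    [CommRing R]
    {A B M P Q : Matrix ι ι R} (s t : R) (hA : IsUnit A) (hB : IsUnit B)
    (hP : M = A * P) (hQ : M = B * Q) (hPQ : s • P + t • Q = 1) :
    M = (s • A⁻¹ + t • B⁻¹)⁻¹ := by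
  have hAP : A⁻¹ * M = P := by
    rw [hP, ← Matrix.mul_assoc, Matrix.nonsing_inv_mul A ((A.isUnit_iff_isUnit_det).mp hA),
      Matrix.one_mul]
  have hBQ : B⁻¹ * M = Q := by
    rw [hQ, ← Matrix.mul_assoc, Matrix.nonsing_inv_mul B ((B.isUnit_iff_isUnit_det).mp hB),
      Matrix.one_mul]
  refine (Matrix.inv_eq_right_inv ?_).symm
  rw [Matrix.add_mul, Matrix.smul_mul, Matrix.smul_mul, hAP, hBQ, hPQ]

section jacobianMatrix

variable {n : ℕ} {f g : (Fin n → ℝ) → Fin n → ℝ} {x : Fin n → ℝ}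

theorem jacobianMatrix_eq_toMatrix' (g : (Fin n → ℝ) → Fin n → ℝ) (x : Fin n → ℝ) :
    jacobianMatrix g x = LinearMap.toMatrix' (fderiv ℝ g x).toLinearMap := by
  ext i j
  simp [jacobianMatrix, LinearMap.toMatrix'_apply]

theorem Filter.EventuallyEq.jacobianMatrix_eq (h : f =ᶠ[𝓝 x] g) :
    jacobianMatrix f x = jacobianMatrix g x := by
  rw [jacobianMatrix, jacobianMatrix, h.fderiv_eq]

theorem jacobianMatrix_id' : jacobianMatrix (fun y : Fin n → ℝ => y) x = 1 := by
  rw [jacobianMatrix_eq_toMatrix', fderiv_fun_id, ContinuousLinearMap.coe_id,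
    LinearMap.toMatrix'_id]

theorem jacobianMatrix_comp (hf : DifferentiableAt ℝ f (g x)) (hg : DifferentiableAt ℝ g x) :
    jacobianMatrix (fun y => f (g y)) x = jacobianMatrix f (g x) * jacobianMatrix g x := by
  rw [jacobianMatrix_eq_toMatrix', jacobianMatrix_eq_toMatrix', jacobianMatrix_eq_toMatrix',
    ← LinearMap.toMatrix'_comp]
  exact congrArg (fun L => LinearMap.toMatrix' (ContinuousLinearMap.toLinearMap L))
    (fderiv_comp x hf hg)

theorem jacobianMatrix_smul_add_smul (a b : ℝ) (hf : DifferentiableAt ℝ f x)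
    (hg : DifferentiableAt ℝ g x) :
    jacobianMatrix (fun y => a • f y + b • g y) x =
      a • jacobianMatrix f x + b • jacobianMatrix g x := by
  rw [jacobianMatrix_eq_toMatrix', jacobianMatrix_eq_toMatrix', jacobianMatrix_eq_toMatrix',
    fderiv_fun_add (hf.fun_const_smul a) (hg.fun_const_smul b), fderiv_fun_const_smul hf,
    fderiv_fun_const_smul hg]
  simp only [ContinuousLinearMap.toLinearMap_add, ContinuousLinearMap.toLinearMap_smul, map_add,
    map_smul]

end jacobianMatrix

theorem ContDiffAt.differentiableAt_grad {n : ℕ} {φ : (Fin n → ℝ) → ℝ} {z : Fin n → ℝ}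
    (hφ : ContDiffAt ℝ 2 φ z) : DifferentiableAt ℝ (grad φ) z := by
  have hφ' : DifferentiableAt ℝ (fderiv ℝ φ) z :=
    (hφ.fderiv_right (m := 1) le_rfl).differentiableAt one_ne_zero
  exact differentiableAt_pi.mpr fun i => hφ'.clm_apply (differentiableAt_const _)

theorem jacobianMatrix_grad_comp_eq_inv {n : ℕ} {φ₀ φ₁ : (Fin n → ℝ) → ℝ}
    {ξ η : (Fin n → ℝ) → Fin n → ℝ} {x : Fin n → ℝ} (s t : ℝ)
    (hφ₀ : ContDiffAt ℝ 2 φ₀ (ξ x)) (hφ₁ : ContDiffAt ℝ 2 φ₁ (η x))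
    (hH₀ : IsUnit (hess φ₀ (ξ x))) (hH₁ : IsUnit (hess φ₁ (η x)))
    (hξ : DifferentiableAt ℝ ξ x) (hη : DifferentiableAt ℝ η x)
    (hseg : (fun y => s • ξ y + t • η y) =ᶠ[𝓝 x] fun y => y)
    (hgrad : (fun y => grad φ₀ (ξ y)) =ᶠ[𝓝 x] fun y => grad φ₁ (η y)) :
    jacobianMatrix (fun y => grad φ₀ (ξ y)) x =
      (s • (hess φ₀ (ξ x))⁻¹ + t • (hess φ₁ (η x))⁻¹)⁻¹ := by
  refine Matrix.eq_inv_smul_inv_add_smul_inv (Q := jacobianMatrix η x) s t hH₀ hH₁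
    (jacobianMatrix_comp hφ₀.differentiableAt_grad hξ) ?_ ?_
  · rw [hgrad.jacobianMatrix_eq]
    exact jacobianMatrix_comp hφ₁.differentiableAt_grad hη
  · rw [← jacobianMatrix_smul_add_smul s t hξ hη, hseg.jacobianMatrix_eq, jacobianMatrix_id']

theorem stmt5_general (n : ℕ) (U : Set (Fin n → ℝ)) (hUo : IsOpen U)
    (φ₀ φ₁ : (Fin n → ℝ) → ℝ)
    (hφ₀ : ContDiffOn ℝ 2 φ₀ U) (hφ₁ : ContDiffOn ℝ 2 φ₁ U)
    (hH₀ : ∀ x ∈ U, (hess φ₀ x).PosDef) (hH₁ : ∀ x ∈ U, (hess φ₁ x).PosDef)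
    (W : Set ((Fin n → ℝ) × ℝ)) (hWo : IsOpen W)
    (ξ η : (Fin n → ℝ) × ℝ → Fin n → ℝ)
    (hξU : ∀ p ∈ W, ξ p ∈ U) (hηU : ∀ p ∈ W, η p ∈ U)
    (hξd : ∀ p ∈ W, DifferentiableAt ℝ (fun y => ξ (y, p.2)) p.1)
    (hηd : ∀ p ∈ W, DifferentiableAt ℝ (fun y => η (y, p.2)) p.1)
    (hseg : ∀ p ∈ W, (1 - p.2) • ξ p + p.2 • η p = p.1)
    (hgrad : ∀ p ∈ W, grad φ₀ (ξ p) = grad φ₁ (η p)) :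
    ∀ p ∈ W,
      DifferentiableAt ℝ (fun y => grad φ₀ (ξ (y, p.2))) p.1 ∧
      jacobianMatrix (fun y => grad φ₀ (ξ (y, p.2))) p.1 =
        ((1 - p.2) • (hess φ₀ (ξ p))⁻¹ + p.2 • (hess φ₁ (η p))⁻¹)⁻¹ ∧
      ∀ u : (Fin n → ℝ) × ℝ → ℝ,
        (∀ q ∈ W, grad (fun y => u (y, q.2)) q.1 = grad φ₀ (ξ q)) →
        hess (fun y => u (y, p.2)) p.1 =
          ((1 - p.2) • (hess φ₀ (ξ p))⁻¹ + p.2 • (hess φ₁ (η p))⁻¹)⁻¹ := by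
  rintro ⟨x, t⟩ hp
  have hslice : ∀ᶠ y in 𝓝 x, (y, t) ∈ W :=
    (hWo.preimage (continuous_id.prodMk continuous_const)).mem_nhds hp
  have hφ₀ξ : ContDiffAt ℝ 2 φ₀ (ξ (x, t)) := hφ₀.contDiffAt (hUo.mem_nhds (hξU _ hp))
  have hφ₁η : ContDiffAt ℝ 2 φ₁ (η (x, t)) := hφ₁.contDiffAt (hUo.mem_nhds (hηU _ hp))
  have hjac := jacobianMatrix_grad_comp_eq_inv (1 - t) t hφ₀ξ hφ₁η
    (hH₀ _ (hξU _ hp)).isUnit (hH₁ _ (hηU _ hp)).isUnit (hξd _ hp) (hηd _ hp)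
    (hslice.mono fun y hy => hseg (y, t) hy) (hslice.mono fun y hy => hgrad (y, t) hy)
  refine ⟨(hφ₀ξ.differentiableAt_grad.comp x (hξd _ hp) :), hjac, fun u hu => ?_⟩
  have hu' : grad (fun y => u (y, t)) =ᶠ[𝓝 x] fun y => grad φ₀ (ξ (y, t)) :=
    hslice.mono fun y hy => hu (y, t) hy
  exact hu'.jacobianMatrix_eq.trans hjac

/-- Lemma 3.3 of the paper: if `(1-t)ξ(x,t) + tη(x,t) = x` and
`∇φ₀(ξ(x,t)) = ∇φ₁(η(x,t))`, then `x ↦ ∇φ₀(ξ(x,t))` is differentiable with Jacobian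
`((1-t)(D²φ₀(ξ))⁻¹ + t(D²φ₁(η))⁻¹)⁻¹`; in particular any `u` whose spatial gradient is
`∇φ₀(ξ(x,t))` has this matrix as spatial Hessian `D²ₓₓu(x,t)`. -/
theorem stmt5 (n : ℕ) (U : Set (Fin n → ℝ)) (hUo : IsOpen U) (hUc : Convex ℝ U)
    (φ₀ φ₁ : (Fin n → ℝ) → ℝ)
    (hφ₀ : ContDiffOn ℝ 2 φ₀ U) (hφ₁ : ContDiffOn ℝ 2 φ₁ U)
    (hH₀ : ∀ x ∈ U, (hess φ₀ x).PosDef) (hH₁ : ∀ x ∈ U, (hess φ₁ x).PosDef)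
    (W : Set ((Fin n → ℝ) × ℝ)) (hWo : IsOpen W)
    (hWt : ∀ p ∈ W, p.2 ∈ Set.Ioo (0 : ℝ) 1)
    (ξ η : (Fin n → ℝ) × ℝ → Fin n → ℝ)
    (hξU : ∀ p ∈ W, ξ p ∈ U) (hηU : ∀ p ∈ W, η p ∈ U)
    (hξd : ∀ p ∈ W, DifferentiableAt ℝ (fun y => ξ (y, p.2)) p.1)
    (hηd : ∀ p ∈ W, DifferentiableAt ℝ (fun y => η (y, p.2)) p.1)
    (hseg : ∀ p ∈ W, (1 - p.2) • ξ p + p.2 • η p = p.1)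
    (hgrad : ∀ p ∈ W, grad φ₀ (ξ p) = grad φ₁ (η p)) :
    ∀ p ∈ W,
      DifferentiableAt ℝ (fun y => grad φ₀ (ξ (y, p.2))) p.1 ∧
      jacobianMatrix (fun y => grad φ₀ (ξ (y, p.2))) p.1 =
        ((1 - p.2) • (hess φ₀ (ξ p))⁻¹ + p.2 • (hess φ₁ (η p))⁻¹)⁻¹ ∧
      ∀ u : (Fin n → ℝ) × ℝ → ℝ,
        (∀ q ∈ W, grad (fun y => u (y, q.2)) q.1 = grad φ₀ (ξ q)) →
        hess (fun y => u (y, p.2)) p.1 =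
          ((1 - p.2) • (hess φ₀ (ξ p))⁻¹ + p.2 • (hess φ₁ (η p))⁻¹)⁻¹ :=
  stmt5_general n U hUo φ₀ φ₁ hφ₀ hφ₁ hH₀ hH₁ W hWo ξ η hξU hηU hξd hηd hseg hgrad
end

section
/- Let U ⊆ ℝⁿ be open and convex and let u : U → ℝ be convex. Define u*(y) = sup_{x∈U}(⟨x,y⟩ − u(x)) ∈ ℝ ∪ {+∞} and u**(x) = sup_{y∈ℝⁿ, u*(y)<∞}(⟨x,y⟩ − u*(y)). Then u**(x) = u(x) for every x ∈ U. -/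
open scoped Matrix

/-- The Legendre transform `u*(y) = sup_{x ∈ U}(⟨x,y⟩ - u(x))` with values in `ℝ ∪ {±∞}`. -/
noncomputable def legendreE {n : ℕ} (U : Set (Fin n → ℝ)) (u : (Fin n → ℝ) → ℝ)
    (y : Fin n → ℝ) : EReal :=
  ⨆ x ∈ U, ((x ⬝ᵥ y - u x : ℝ) : EReal)

/-- Existence of a subgradient for a convex function on an open convex set. -/
lemma exists_subgradient' {n : ℕ} {U : Set (Fin n → ℝ)} (hUo : IsOpen U) (hUc : Convex ℝ U)
    {u : (Fin n → ℝ) → ℝ} (hu : ConvexOn ℝ U u) {x₀ : Fin n → ℝ} (hx₀ : x₀ ∈ U) :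
    ∃ p : Fin n → ℝ, ∀ x ∈ U, u x₀ + (x - x₀) ⬝ᵥ p ≤ u x := by
  set S : Set ((Fin n → ℝ) × ℝ) := {q | q.1 ∈ U ∧ u q.1 < q.2} with hS
  have hSo : IsOpen S := by
    have hcont : ContinuousOn (fun q : (Fin n → ℝ) × ℝ => q.2 - u q.1) (U ×ˢ Set.univ) := by
      apply ContinuousOn.sub continuousOn_snd
      exact (hu.continuousOn hUo).comp continuousOn_fst (fun q hq => hq.1)
    have hEq : S = (U ×ˢ Set.univ) ∩
        ((fun q : (Fin n → ℝ) × ℝ => q.2 - u q.1) ⁻¹' Set.Ioi (0 : ℝ)) := by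
      ext q
      simp only [hS, Set.mem_setOf_eq, Set.mem_inter_iff, Set.mem_preimage, Set.mem_prod,
        Set.mem_univ, and_true, Set.mem_Ioi, sub_pos]
    rw [hEq]
    exact hcont.isOpen_inter_preimage (hUo.prod isOpen_univ) isOpen_Ioi
  have hSc : Convex ℝ S := by
    rintro a ⟨haU, ha⟩ b ⟨hbU, hb⟩ s t hs ht hst
    refine ⟨hUc haU hbU hs ht hst, ?_⟩
    have h1 := hu.2 haU hbU hs ht hst
    have hlt : s * u a.1 + t * u b.1 < s * a.2 + t * b.2 := by
      rcases hs.lt_or_eq with hs' | hs'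
      · have := mul_le_mul_of_nonneg_left hb.le ht
        nlinarith [mul_lt_mul_of_pos_left ha hs']
      · have hts : t = 1 := by linarith
        rw [← hs', hts]; simpa using hb
    calc u ((s • a + t • b).1) = u (s • a.1 + t • b.1) := rfl
      _ ≤ s * u a.1 + t * u b.1 := by simpa using h1
      _ < s * a.2 + t * b.2 := hlt
      _ = (s • a + t • b).2 := by simp
  have hx₀S : (x₀, u x₀) ∉ S := fun h => lt_irrefl _ h.2
  obtain ⟨f, hf⟩ := geometric_hahn_banach_open_point hSc hSo hx₀S
  set c : ℝ := f (0, 1) with hc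
  have hsplit : ∀ (x : Fin n → ℝ) (t : ℝ), f (x, t) = f (x, 0) + t * c := by
    intro x t
    have : (x, t) = (x, 0) + t • ((0 : Fin n → ℝ), (1 : ℝ)) := by
      simp [Prod.ext_iff]
    rw [this, map_add, map_smul, smul_eq_mul, hc]
  have hcneg : c < 0 := by
    have h := hf (x₀, u x₀ + 1) ⟨hx₀, by show u x₀ < u x₀ + 1; linarith⟩
    have e1 := hsplit x₀ (u x₀ + 1)
    have e2 := hsplit x₀ (u x₀)
    linarith
  -- key inequality: f (x, 0) + u x * c ≤ f (x₀, 0) + u x₀ * c for all x ∈ U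
  have key : ∀ x ∈ U, f (x, 0) + u x * c ≤ f (x₀, 0) + u x₀ * c := by
    intro x hx
    have hstep : ∀ ε > (0 : ℝ), f (x, 0) + u x * c ≤ f (x₀, 0) + u x₀ * c + ε := by
      intro ε hε
      have hdp : 0 < ε / (-c) := div_pos hε (by linarith)
      have h := hf (x, u x + ε / (-c)) ⟨hx, by show u x < u x + ε / (-c); linarith⟩
      have e1 := hsplit x (u x + ε / (-c))
      have e2 := hsplit x₀ (u x₀)
      have hne : c ≠ 0 := hcneg.ne
      have hdiv : ε / (-c) * c = -ε := by
        rw [div_neg, neg_mul, div_mul_cancel₀ _ hne]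
      nlinarith
    exact le_of_forall_pos_le_add hstep
  -- the linear functional x ↦ f (x, 0)
  set L : (Fin n → ℝ) →ₗ[ℝ] ℝ := f.toLinearMap.comp (LinearMap.inl ℝ (Fin n → ℝ) ℝ) with hL
  have hLapp : ∀ x, L x = f (x, 0) := fun x => rfl
  set p : Fin n → ℝ := fun i => L (fun j => if i = j then 1 else 0) / (-c) with hp
  have hdot : ∀ x : Fin n → ℝ, x ⬝ᵥ p = L x / (-c) := by
    intro x
    rw [LinearMap.pi_apply_eq_sum_univ L x, dotProduct, Finset.sum_div]
    refine Finset.sum_congr rfl fun i _ => ?_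
    rw [hp, smul_eq_mul, mul_div_assoc]
  refine ⟨p, fun x hx => ?_⟩
  have h1 : L x + u x * c ≤ L x₀ + u x₀ * c := key x hx
  have h2 : (x - x₀) ⬝ᵥ p = (L x - L x₀) / (-c) := by
    rw [sub_dotProduct, hdot, hdot, sub_div]
  have hcpos : 0 < -c := by linarith
  have h3 : (L x - L x₀) / (-c) * (-c) = L x - L x₀ := div_mul_cancel₀ _ hcpos.ne'
  rw [h2]
  nlinarith [h3, hcpos, h1]

/-- Involutivity of the Legendre transform (Proposition 1.2(3)): for a convex function
`u` on an open convex `U ⊆ ℝⁿ`, the biconjugate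
`u**(x) = sup_{y : u*(y) < ∞}(⟨x,y⟩ - u*(y))` equals `u(x)` for every `x ∈ U`. -/
theorem stmt10 (n : ℕ) (U : Set (Fin n → ℝ)) (hUo : IsOpen U) (hUc : Convex ℝ U)
    (u : (Fin n → ℝ) → ℝ) (hu : ConvexOn ℝ U u) :
    ∀ x ∈ U,
      (⨆ y ∈ {y : Fin n → ℝ | legendreE U u y < ⊤},
        ((x ⬝ᵥ y : ℝ) : EReal) - legendreE U u y) = (u x : EReal) := by
  intro x₀ hx₀
  obtain ⟨p, hp⟩ := exists_subgradient' hUo hUc hu hx₀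
  have hLp : legendreE U u p = ((x₀ ⬝ᵥ p - u x₀ : ℝ) : EReal) := by
    apply le_antisymm
    · refine iSup₂_le fun x hx => ?_
      rw [EReal.coe_le_coe_iff]
      have := hp x hx
      rw [sub_dotProduct] at this
      linarith
    · exact le_iSup₂ (f := fun x (_ : x ∈ U) => ((x ⬝ᵥ p - u x : ℝ) : EReal)) x₀ hx₀
  apply le_antisymm
  · refine iSup₂_le fun y hy => ?_
    have hge : ((x₀ ⬝ᵥ y - u x₀ : ℝ) : EReal) ≤ legendreE U u y :=
      le_iSup₂ (f := fun x (_ : x ∈ U) => ((x ⬝ᵥ y - u x : ℝ) : EReal)) x₀ hx₀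
    calc ((x₀ ⬝ᵥ y : ℝ) : EReal) - legendreE U u y
        ≤ ((x₀ ⬝ᵥ y : ℝ) : EReal) - ((x₀ ⬝ᵥ y - u x₀ : ℝ) : EReal) :=
          EReal.sub_le_sub le_rfl hge
      _ = (u x₀ : EReal) := by rw [← EReal.coe_sub]; norm_num
  · have hmem : p ∈ {y : Fin n → ℝ | legendreE U u y < ⊤} := by
      rw [Set.mem_setOf_eq, hLp]; exact EReal.coe_lt_top _
    have := le_iSup₂ (f := fun y (_ : y ∈ {y : Fin n → ℝ | legendreE U u y < ⊤}) =>
      ((x₀ ⬝ᵥ y : ℝ) : EReal) - legendreE U u y) p hmem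
    refine le_trans ?_ this
    rw [hLp, ← EReal.coe_sub]
    norm_num
end

section
/- On the closed square [−1,1] × [0,1] define u(x,t) as follows: u(x,t) = 2(1−t)·(((x+t)/(1−t))² − 1) if x + t < −(1−t)/2; u(x,t) = 2x²/(1+t) + t − 2 if |x| ≤ (1+t)/2 (equivalently −(1−t)/2 ≤ x + t and x − t ≤ (1−t)/2); u(x,t) = 2(1−t)·(((x−t)/(1−t))² − 1) if x − t > (1−t)/2; and u(x,1) = x² − 1. Then: (i) u is continuous on [−1,1] × [0,1]; (ii) u is convex on [−1,1] × [0,1] as a function of the joint variables (x,t); (iii) u(x,0) = 2(x² − 1) and u(x,1) = x² − 1 for all x ∈ [−1,1], and u(−1,t) = u(1,t) = 0 for all t ∈ [0,1]; (iv) on the interior of each of the three regions {x+t < −(1−t)/2, t<1}, {|x| < (1+t)/2, t<1}, {x−t > (1−t)/2, t<1} intersected with (−1,1)×(0,1), u is smooth and the determinant of its 2×2 Hessian in (x,t) vanishes identically. -/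
open Classical in
/-- The explicit weak geodesic of Example 2.1 joining `u₀(x) = 2(x²-1)` and
`u₁(x) = x²-1` on `U = (-1,1)`. -/
noncomputable def geo (x t : ℝ) : ℝ :=
  if t = 1 then x ^ 2 - 1
  else if x + t < -(1 - t) / 2 then 2 * (1 - t) * (((x + t) / (1 - t)) ^ 2 - 1)
  else if x - t > (1 - t) / 2 then 2 * (1 - t) * (((x - t) / (1 - t)) ^ 2 - 1)
  else 2 * x ^ 2 / (1 + t) + t - 2

/-- The determinant `u_{xx}u_{tt} - u_{xt}²` of the Hessian of a function of two
real variables. -/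
noncomputable def hessDet2 (f : ℝ → ℝ → ℝ) (x t : ℝ) : ℝ :=
  deriv (fun a => deriv (fun b => f b t) a) x *
    deriv (fun a => deriv (fun b => f x b) a) t -
  (deriv (fun a => deriv (fun b => f b a) x) t) ^ 2

lemma geo_eqL (x t : ℝ) (ht : t < 1) (h : x + t < -(1 - t) / 2) :
    geo x t = 2 * (x + 1) ^ 2 / (1 - t) - 4 * (x + 1) := by
  have h1 : (1:ℝ) - t ≠ 0 := by linarith
  rw [geo, if_neg (by linarith : t ≠ 1), if_pos h]
  field_simp
  ring

lemma geo_eqR (x t : ℝ) (ht : t < 1) (h1 : ¬(x + t < -(1 - t) / 2))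
    (h : x - t > (1 - t) / 2) :
    geo x t = 2 * (x - 1) ^ 2 / (1 - t) + 4 * (x - 1) := by
  have hne : (1:ℝ) - t ≠ 0 := by linarith
  rw [geo, if_neg (by linarith : t ≠ 1), if_neg h1, if_pos h]
  field_simp
  ring

lemma geo_eqM (x t : ℝ) (h : t = 1 ∨ (¬(x + t < -(1 - t) / 2) ∧ ¬(x - t > (1 - t) / 2))) :
    geo x t = 2 * x ^ 2 / (1 + t) + t - 2 := by
  rcases h with h | ⟨h1, h2⟩
  · subst h; rw [geo, if_pos rfl]; norm_num; ring
  · by_cases ht : t = 1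
    · subst ht; rw [geo, if_pos rfl]; norm_num; ring
    · rw [geo, if_neg ht, if_neg h1, if_neg h2]

lemma ineq_LL (x t x0 t0 : ℝ) (ht0 : 0 ≤ t0) (ht01 : t0 < 1) (hx0 : -1 ≤ x0) (hb : 2*(x0+t0) ≤ -(1-t0))
    (ht : 0 ≤ t) (ht1 : t < 1) (hx : -1 ≤ x) (hc : 2*(x+t) ≤ -(1-t)) :
    2*(x0+1)^2/(1-t0) - 4*(x0+1) + (4*(x0+1)/(1-t0) - 4)*(x-x0) + (2*(x0+1)^2/(1-t0)^2)*(t-t0) ≤ 2*(x+1)^2/(1-t) - 4*(x+1) := by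
  have key : (2*(x+1)^2/(1-t) - 4*(x+1)) - (2*(x0+1)^2/(1-t0) - 4*(x0+1) + (4*(x0+1)/(1-t0) - 4)*(x-x0) + (2*(x0+1)^2/(1-t0)^2)*(t-t0)) = (2*t0^2 + 4*x0*t0 + 2*x0^2 - 4*t*t0 - 4*t*x0 - 4*t*x0*t0 - 4*t*x0^2 + 2*t^2 + 4*t^2*x0 + 2*t^2*x0^2 - 4*x*t0 + 4*x*t0^2 - 4*x*x0 + 4*x*x0*t0 + 4*x*t - 4*x*t*t0 + 4*x*t*x0 - 4*x*t*x0*t0 + 2*x^2 - 4*x^2*t0 + 2*x^2*t0^2) / ((1-t)*(1-t0)^2) := by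
    field_simp [show (1:ℝ)-t0 ≠ 0 by linarith, show (1:ℝ)-t ≠ 0 by linarith]
    ring
  have hN : (0:ℝ) ≤ (2*t0^2 + 4*x0*t0 + 2*x0^2 - 4*t*t0 - 4*t*x0 - 4*t*x0*t0 - 4*t*x0^2 + 2*t^2 + 4*t^2*x0 + 2*t^2*x0^2 - 4*x*t0 + 4*x*t0^2 - 4*x*x0 + 4*x*x0*t0 + 4*x*t - 4*x*t*t0 + 4*x*t*x0 - 4*x*t*x0*t0 + 2*x^2 - 4*x^2*t0 + 2*x^2*t0^2) := by
    nlinarith [sq_nonneg ((x+1)*(1-t0) - (x0+1)*(1-t))]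
  have hpos : (0:ℝ) ≤ (2*t0^2 + 4*x0*t0 + 2*x0^2 - 4*t*t0 - 4*t*x0 - 4*t*x0*t0 - 4*t*x0^2 + 2*t^2 + 4*t^2*x0 + 2*t^2*x0^2 - 4*x*t0 + 4*x*t0^2 - 4*x*x0 + 4*x*x0*t0 + 4*x*t - 4*x*t*t0 + 4*x*t*x0 - 4*x*t*x0*t0 + 2*x^2 - 4*x^2*t0 + 2*x^2*t0^2) / ((1-t)*(1-t0)^2) := div_nonneg hN (mul_nonneg (by linarith) (by positivity))
  linarith [key, hpos]

lemma ineq_LM (x t x0 t0 : ℝ) (ht0 : 0 ≤ t0) (ht01 : t0 < 1) (hx0 : -1 ≤ x0) (hb : 2*(x0+t0) ≤ -(1-t0))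
    (ht : 0 ≤ t) (ht1 : t ≤ 1) (hc1 : -(1+t) ≤ 2*x) (hc2 : 2*x ≤ 1+t) :
    2*(x0+1)^2/(1-t0) - 4*(x0+1) + (4*(x0+1)/(1-t0) - 4)*(x-x0) + (2*(x0+1)^2/(1-t0)^2)*(t-t0) ≤ 2*x^2/(1+t) + t - 2 := by
  have key : (2*x^2/(1+t) + t - 2) - (2*(x0+1)^2/(1-t0) - 4*(x0+1) + (4*(x0+1)/(1-t0) - 4)*(x-x0) + (2*(x0+1)^2/(1-t0)^2)*(t-t0)) = (2*t0^2 + 4*x0*t0 + 2*x0^2 - t - 2*t*t0 + 3*t*t0^2 - 4*t*x0 + 4*t*x0*t0 - t^2 - 2*t^2*t0 + t^2*t0^2 - 4*t^2*x0 - 2*t^2*x0^2 - 4*x*t0 + 4*x*t0^2 - 4*x*x0 + 4*x*x0*t0 - 4*x*t*t0 + 4*x*t*t0^2 - 4*x*t*x0 + 4*x*t*x0*t0 + 2*x^2 - 4*x^2*t0 + 2*x^2*t0^2) / ((1+t)*(1-t0)^2) := by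
    field_simp [show (1:ℝ)-t0 ≠ 0 by linarith, show (1:ℝ)+t ≠ 0 by linarith]
    ring
  have hN : (0:ℝ) ≤ (2*t0^2 + 4*x0*t0 + 2*x0^2 - t - 2*t*t0 + 3*t*t0^2 - 4*t*x0 + 4*t*x0*t0 - t^2 - 2*t^2*t0 + t^2*t0^2 - 4*t^2*x0 - 2*t^2*x0^2 - 4*x*t0 + 4*x*t0^2 - 4*x*x0 + 4*x*x0*t0 - 4*x*t*t0 + 4*x*t*t0^2 - 4*x*t*x0 + 4*x*t*x0*t0 + 2*x^2 - 4*x^2*t0 + 2*x^2*t0^2) := by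
    have hm : (0:ℝ) ≤ (1-t0) - 2*(x0+1) := by linarith
    have hA : (0:ℝ) ≤ (1-t)*((1-t0) - 2*(x0+1)) := mul_nonneg (by linarith) hm
    have hB : (0:ℝ) ≤ (1-t0)*(2*x+1+t) := mul_nonneg (by linarith) (by linarith)
    have hn : (0:ℝ) ≤ 4*(x+1)*(1-t0) - (1-t)*(2*(x0+1)+(1-t0)) := by nlinarith [hA, hB]
    nlinarith [sq_nonneg ((2*x+1+t)*(1-t0)), mul_nonneg (mul_nonneg (show (0:ℝ) ≤ 1+t by linarith) hm) hn]
  have hpos : (0:ℝ) ≤ (2*t0^2 + 4*x0*t0 + 2*x0^2 - t - 2*t*t0 + 3*t*t0^2 - 4*t*x0 + 4*t*x0*t0 - t^2 - 2*t^2*t0 + t^2*t0^2 - 4*t^2*x0 - 2*t^2*x0^2 - 4*x*t0 + 4*x*t0^2 - 4*x*x0 + 4*x*x0*t0 - 4*x*t*t0 + 4*x*t*t0^2 - 4*x*t*x0 + 4*x*t*x0*t0 + 2*x^2 - 4*x^2*t0 + 2*x^2*t0^2) / ((1+t)*(1-t0)^2) := div_nonneg hN (mul_nonneg (by linarith) (by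 positivity))
  linarith [key, hpos]

lemma ineq_LR (x t x0 t0 : ℝ) (ht0 : 0 ≤ t0) (ht01 : t0 < 1) (hx0 : -1 ≤ x0) (hb : 2*(x0+t0) ≤ -(1-t0))
    (ht : 0 ≤ t) (ht1 : t < 1) (hx : x ≤ 1) (hc : 1-t ≤ 2*(x-t)) :
    2*(x0+1)^2/(1-t0) - 4*(x0+1) + (4*(x0+1)/(1-t0) - 4)*(x-x0) + (2*(x0+1)^2/(1-t0)^2)*(t-t0) ≤ 2*(x-1)^2/(1-t) + 4*(x-1) := by
  have key : (2*(x-1)^2/(1-t) + 4*(x-1)) - (2*(x0+1)^2/(1-t0) - 4*(x0+1) + (4*(x0+1)/(1-t0) - 4)*(x-x0) + (2*(x0+1)^2/(1-t0)^2)*(t-t0)) = (2*t0^2 + 4*x0*t0 + 2*x0^2 - 4*t*t0 - 4*t*x0 - 4*t*x0*t0 - 4*t*x0^2 + 2*t^2 + 4*t^2*x0 + 2*t^2*x0^2 - 4*x*t0 + 4*x*t0^2 - 4*x*x0 + 4*x*x0*t0 - 4*x*t + 12*x*t*t0 - 8*x*t*t0^2 + 4*x*t*x0 - 4*x*t*x0*t0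 + 2*x^2 - 4*x^2*t0 + 2*x^2*t0^2) / ((1-t)*(1-t0)^2) := by
    field_simp [show (1:ℝ)-t0 ≠ 0 by linarith, show (1:ℝ)-t ≠ 0 by linarith]
    ring
  have hN : (0:ℝ) ≤ (2*t0^2 + 4*x0*t0 + 2*x0^2 - 4*t*t0 - 4*t*x0 - 4*t*x0*t0 - 4*t*x0^2 + 2*t^2 + 4*t^2*x0 + 2*t^2*x0^2 - 4*x*t0 + 4*x*t0^2 - 4*x*x0 + 4*x*x0*t0 - 4*x*t + 12*x*t*t0 - 8*x*t*t0^2 + 4*x*t*x0 - 4*x*t*x0*t0 + 2*x^2 - 4*x^2*t0 + 2*x^2*t0^2) := by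
    have hm : (0:ℝ) ≤ (1-t0) - 2*(x0+1) := by linarith
    have hA : (0:ℝ) ≤ (1-t)*((1-t0) - 2*(x0+1)) := mul_nonneg (by linarith) hm
    have hB : (0:ℝ) ≤ (1-t0)*(2*x+1+t) := mul_nonneg (by linarith) (by linarith)
    have hn : (0:ℝ) ≤ 4*(x+1)*(1-t0) - (1-t)*(2*(x0+1)+(1-t0)) := by nlinarith [hA, hB]
    nlinarith [sq_nonneg ((x-1)*(1-t0)), mul_nonneg (mul_nonneg (show (0:ℝ) ≤ 1-t by linarith) (show (0:ℝ) ≤ 6*x-2 by linarith)) (sq_nonneg (1-t0)), sq_nonneg ((1-t)*(1-t0)), mul_nonneg (mul_nonneg (show (0:ℝ) ≤ 1-t by linarith) hm) hn]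
  have hpos : (0:ℝ) ≤ (2*t0^2 + 4*x0*t0 + 2*x0^2 - 4*t*t0 - 4*t*x0 - 4*t*x0*t0 - 4*t*x0^2 + 2*t^2 + 4*t^2*x0 + 2*t^2*x0^2 - 4*x*t0 + 4*x*t0^2 - 4*x*x0 + 4*x*x0*t0 - 4*x*t + 12*x*t*t0 - 8*x*t*t0^2 + 4*x*t*x0 - 4*x*t*x0*t0 + 2*x^2 - 4*x^2*t0 + 2*x^2*t0^2) / ((1-t)*(1-t0)^2) := div_nonneg hN (mul_nonneg (by linarith) (by positivity))
  linarith [key, hpos]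

lemma ineq_ML (x t x0 t0 : ℝ) (ht0 : 0 ≤ t0) (ht01 : t0 ≤ 1) (hb1 : -(1+t0) ≤ 2*x0) (hb2 : 2*x0 ≤ 1+t0)
    (ht : 0 ≤ t) (ht1 : t < 1) (hx : -1 ≤ x) (hc : 2*(x+t) ≤ -(1-t)) :
    2*x0^2/(1+t0) + t0 - 2 + (4*x0/(1+t0))*(x-x0) + (1 - 2*x0^2/(1+t0)^2)*(t-t0) ≤ 2*(x+1)^2/(1-t) - 4*(x+1) := by
  have key : (2*(x+1)^2/(1-t) - 4*(x+1)) - (2*x0^2/(1+t0) + t0 - 2 + (4*x0/(1+t0))*(x-x0) + (1 - 2*x0^2/(1+t0)^2)*(t-t0)) = (2*x0^2 + t + 2*t*t0 + t*t0^2 + t^2 + 2*t^2*t0 + t^2*t0^2 - 2*t^2*x0^2 - 4*x*x0 - 4*x*x0*t0 + 4*x*t + 8*x*t*t0 + 4*x*t*t0^2 + 4*x*t*x0 + 4*x*t*x0*t0 + 2*x^2 + 4*x^2*t0 + 2*x^2*t0^2) / ((1-t)*(1+t0)^2) := by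
    field_simp [show (1:ℝ)+t0 ≠ 0 by linarith, show (1:ℝ)-t ≠ 0 by linarith]
    ring
  have hN : (0:ℝ) ≤ (2*x0^2 + t + 2*t*t0 + t*t0^2 + t^2 + 2*t^2*t0 + t^2*t0^2 - 2*t^2*x0^2 - 4*x*x0 - 4*x*x0*t0 + 4*x*t + 8*x*t*t0 + 4*x*t*t0^2 + 4*x*t*x0 + 4*x*t*x0*t0 + 2*x^2 + 4*x^2*t0 + 2*x^2*t0^2) := by
    have hp : (0:ℝ) ≤ 2*x0+1+t0 := by linarith
    have hC : (0:ℝ) ≤ (1+t)*(2*x0+1+t0) := mul_nonneg (by linarith) hp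
    have hD : (0:ℝ) ≤ (1+t0)*(-(2*x)-(1+t)) := mul_nonneg (by linarith) (by linarith)
    have hq : (0:ℝ) ≤ (1+t)*(2*x0-(1+t0)) - 4*x*(1+t0) := by nlinarith [hC, hD]
    nlinarith [sq_nonneg ((2*x+1+t)*(1+t0)), mul_nonneg (mul_nonneg (show (0:ℝ) ≤ 1-t by linarith) hp) hq]
  have hpos : (0:ℝ) ≤ (2*x0^2 + t + 2*t*t0 + t*t0^2 + t^2 + 2*t^2*t0 + t^2*t0^2 - 2*t^2*x0^2 - 4*x*x0 - 4*x*x0*t0 + 4*x*t + 8*x*t*t0 + 4*x*t*t0^2 + 4*x*t*x0 + 4*x*t*x0*t0 + 2*x^2 + 4*x^2*t0 + 2*x^2*t0^2) / ((1-t)*(1+t0)^2) := div_nonneg hN (mul_nonneg (by linarith) (by positivity))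
  linarith [key, hpos]

lemma ineq_MM (x t x0 t0 : ℝ) (ht0 : 0 ≤ t0) (ht01 : t0 ≤ 1) (hb1 : -(1+t0) ≤ 2*x0) (hb2 : 2*x0 ≤ 1+t0)
    (ht : 0 ≤ t) (ht1 : t ≤ 1) (hc1 : -(1+t) ≤ 2*x) (hc2 : 2*x ≤ 1+t) :
    2*x0^2/(1+t0) + t0 - 2 + (4*x0/(1+t0))*(x-x0) + (1 - 2*x0^2/(1+t0)^2)*(t-t0) ≤ 2*x^2/(1+t) + t - 2 := by
  have key : (2*x^2/(1+t) + t - 2) - (2*x0^2/(1+t0) + t0 - 2 + (4*x0/(1+t0))*(x-x0) + (1 - 2*x0^2/(1+t0)^2)*(t-t0)) = (2*x0^2 + 4*t*x0^2 + 2*t^2*x0^2 - 4*x*x0 - 4*x*x0*t0 - 4*x*t*x0 - 4*x*t*x0*t0 + 2*x^2 + 4*x^2*t0 + 2*x^2*t0^2) / ((1+t)*(1+t0)^2) := by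
    field_simp [show (1:ℝ)+t0 ≠ 0 by linarith, show (1:ℝ)+t ≠ 0 by linarith]
    ring
  have hN : (0:ℝ) ≤ (2*x0^2 + 4*t*x0^2 + 2*t^2*x0^2 - 4*x*x0 - 4*x*x0*t0 - 4*x*t*x0 - 4*x*t*x0*t0 + 2*x^2 + 4*x^2*t0 + 2*x^2*t0^2) := by
    nlinarith [sq_nonneg (x*(1+t0) - x0*(1+t))]
  have hpos : (0:ℝ) ≤ (2*x0^2 + 4*t*x0^2 + 2*t^2*x0^2 - 4*x*x0 - 4*x*x0*t0 - 4*x*t*x0 - 4*x*t*x0*t0 + 2*x^2 + 4*x^2*t0 + 2*x^2*t0^2) / ((1+t)*(1+t0)^2) := div_nonneg hN (mul_nonneg (by linarith) (by positivity))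
  linarith [key, hpos]

lemma ineq_MR (x t x0 t0 : ℝ) (ht0 : 0 ≤ t0) (ht01 : t0 ≤ 1) (hb1 : -(1+t0) ≤ 2*x0) (hb2 : 2*x0 ≤ 1+t0)
    (ht : 0 ≤ t) (ht1 : t < 1) (hx : x ≤ 1) (hc : 1-t ≤ 2*(x-t)) :
    2*x0^2/(1+t0) + t0 - 2 + (4*x0/(1+t0))*(x-x0) + (1 - 2*x0^2/(1+t0)^2)*(t-t0) ≤ 2*(x-1)^2/(1-t) + 4*(x-1) := by
  have key : (2*(x-1)^2/(1-t) + 4*(x-1)) - (2*x0^2/(1+t0) + t0 - 2 + (4*x0/(1+t0))*(x-x0) + (1 - 2*x0^2/(1+t0)^2)*(t-t0)) = (2*x0^2 + t + 2*t*t0 + t*t0^2 + t^2 + 2*t^2*t0 + t^2*t0^2 - 2*t^2*x0^2 - 4*x*x0 - 4*x*x0*t0 - 4*x*t - 8*x*t*t0 - 4*x*t*t0^2 + 4*x*t*x0 + 4*x*t*x0*t0 + 2*x^2 + 4*x^2*t0 + 2*x^2*t0^2) / ((1-t)*(1+t0)^2) := by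
    field_simp [show (1:ℝ)+t0 ≠ 0 by linarith, show (1:ℝ)-t ≠ 0 by linarith]
    ring
  have hN : (0:ℝ) ≤ (2*x0^2 + t + 2*t*t0 + t*t0^2 + t^2 + 2*t^2*t0 + t^2*t0^2 - 2*t^2*x0^2 - 4*x*x0 - 4*x*x0*t0 - 4*x*t - 8*x*t*t0 - 4*x*t*t0^2 + 4*x*t*x0 + 4*x*t*x0*t0 + 2*x^2 + 4*x^2*t0 + 2*x^2*t0^2) := by
    have hp : (0:ℝ) ≤ 1+t0-2*x0 := by linarith
    have hC : (0:ℝ) ≤ (1+t)*(1+t0-2*x0) := mul_nonneg (by linarith) hp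
    have hD : (0:ℝ) ≤ (1+t0)*(2*x-(1+t)) := mul_nonneg (by linarith) (by linarith)
    have hq : (0:ℝ) ≤ (1+t)*(-(2*x0)-(1+t0)) + 4*x*(1+t0) := by nlinarith [hC, hD]
    nlinarith [sq_nonneg ((2*x-1-t)*(1+t0)), mul_nonneg (mul_nonneg (show (0:ℝ) ≤ 1-t by linarith) hp) hq]
  have hpos : (0:ℝ) ≤ (2*x0^2 + t + 2*t*t0 + t*t0^2 + t^2 + 2*t^2*t0 + t^2*t0^2 - 2*t^2*x0^2 - 4*x*x0 - 4*x*x0*t0 - 4*x*t - 8*x*t*t0 - 4*x*t*t0^2 + 4*x*t*x0 + 4*x*t*x0*t0 + 2*x^2 + 4*x^2*t0 + 2*x^2*t0^2) / ((1-t)*(1+t0)^2) := div_nonneg hN (mul_nonneg (by linarith) (by positivity))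
  linarith [key, hpos]

lemma ineq_RL (x t x0 t0 : ℝ) (ht0 : 0 ≤ t0) (ht01 : t0 < 1) (hx0 : x0 ≤ 1) (hb : 1-t0 ≤ 2*(x0-t0))
    (ht : 0 ≤ t) (ht1 : t < 1) (hx : -1 ≤ x) (hc : 2*(x+t) ≤ -(1-t)) :
    2*(x0-1)^2/(1-t0) + 4*(x0-1) + (4*(x0-1)/(1-t0) + 4)*(x-x0) + (2*(x0-1)^2/(1-t0)^2)*(t-t0) ≤ 2*(x+1)^2/(1-t) - 4*(x+1) := by
  have key : (2*(x+1)^2/(1-t) - 4*(x+1)) - (2*(x0-1)^2/(1-t0) + 4*(x0-1) + (4*(x0-1)/(1-t0) + 4)*(x-x0) + (2*(x0-1)^2/(1-t0)^2)*(t-t0)) = (2*t0^2 - 4*x0*t0 + 2*x0^2 - 4*t*t0 + 4*t*x0 + 4*t*x0*t0 - 4*t*x0^2 + 2*t^2 - 4*t^2*x0 + 2*t^2*x0^2 + 4*x*t0 - 4*x*t0^2 - 4*x*x0 + 4*x*x0*t0 + 4*x*t - 12*x*t*t0 + 8*x*t*t0^2 + 4*x*t*x0 - 4*x*t*x0*t0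 + 2*x^2 - 4*x^2*t0 + 2*x^2*t0^2) / ((1-t)*(1-t0)^2) := by
    field_simp [show (1:ℝ)-t0 ≠ 0 by linarith, show (1:ℝ)-t ≠ 0 by linarith]
    ring
  have hN : (0:ℝ) ≤ (2*t0^2 - 4*x0*t0 + 2*x0^2 - 4*t*t0 + 4*t*x0 + 4*t*x0*t0 - 4*t*x0^2 + 2*t^2 - 4*t^2*x0 + 2*t^2*x0^2 + 4*x*t0 - 4*x*t0^2 - 4*x*x0 + 4*x*x0*t0 + 4*x*t - 12*x*t*t0 + 8*x*t*t0^2 + 4*x*t*x0 - 4*x*t*x0*t0 + 2*x^2 - 4*x^2*t0 + 2*x^2*t0^2) := by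
    have hm : (0:ℝ) ≤ 2*x0-1-t0 := by linarith
    have hA : (0:ℝ) ≤ (1-t)*(2*x0-1-t0) := mul_nonneg (by linarith) hm
    have hB : (0:ℝ) ≤ (1-t0)*(-(2*x)+1+t) := mul_nonneg (by linarith) (by linarith)
    have hn : (0:ℝ) ≤ 4*(1-x)*(1-t0) - (1-t)*(2*(1-x0)+(1-t0)) := by nlinarith [hA, hB]
    nlinarith [sq_nonneg ((x+1)*(1-t0)), mul_nonneg (mul_nonneg (show (0:ℝ) ≤ 1-t by linarith) (show (0:ℝ) ≤ -(6*x)-2 by linarith)) (sq_nonneg (1-t0)), sq_nonneg ((1-t)*(1-t0)), mul_nonneg (mul_nonneg (show (0:ℝ) ≤ 1-t by linarith) hm) hn]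
  have hpos : (0:ℝ) ≤ (2*t0^2 - 4*x0*t0 + 2*x0^2 - 4*t*t0 + 4*t*x0 + 4*t*x0*t0 - 4*t*x0^2 + 2*t^2 - 4*t^2*x0 + 2*t^2*x0^2 + 4*x*t0 - 4*x*t0^2 - 4*x*x0 + 4*x*x0*t0 + 4*x*t - 12*x*t*t0 + 8*x*t*t0^2 + 4*x*t*x0 - 4*x*t*x0*t0 + 2*x^2 - 4*x^2*t0 + 2*x^2*t0^2) / ((1-t)*(1-t0)^2) := div_nonneg hN (mul_nonneg (by linarith) (by positivity))
  linarith [key, hpos]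

lemma ineq_RM (x t x0 t0 : ℝ) (ht0 : 0 ≤ t0) (ht01 : t0 < 1) (hx0 : x0 ≤ 1) (hb : 1-t0 ≤ 2*(x0-t0))
    (ht : 0 ≤ t) (ht1 : t ≤ 1) (hc1 : -(1+t) ≤ 2*x) (hc2 : 2*x ≤ 1+t) :
    2*(x0-1)^2/(1-t0) + 4*(x0-1) + (4*(x0-1)/(1-t0) + 4)*(x-x0) + (2*(x0-1)^2/(1-t0)^2)*(t-t0) ≤ 2*x^2/(1+t) + t - 2 := by
  have key : (2*x^2/(1+t) + t - 2) - (2*(x0-1)^2/(1-t0) + 4*(x0-1) + (4*(x0-1)/(1-t0) + 4)*(x-x0) + (2*(x0-1)^2/(1-t0)^2)*(t-t0)) = (2*t0^2 - 4*x0*t0 + 2*x0^2 - t - 2*t*t0 + 3*t*t0^2 + 4*t*x0 - 4*t*x0*t0 - t^2 - 2*t^2*t0 + t^2*t0^2 + 4*t^2*x0 - 2*t^2*x0^2 + 4*x*t0 - 4*x*t0^2 - 4*x*x0 + 4*x*x0*t0 + 4*x*t*t0 - 4*x*t*t0^2 - 4*x*t*x0 + 4*x*t*x0*t0 + 2*x^2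 - 4*x^2*t0 + 2*x^2*t0^2) / ((1+t)*(1-t0)^2) := by
    field_simp [show (1:ℝ)-t0 ≠ 0 by linarith, show (1:ℝ)+t ≠ 0 by linarith]
    ring
  have hN : (0:ℝ) ≤ (2*t0^2 - 4*x0*t0 + 2*x0^2 - t - 2*t*t0 + 3*t*t0^2 + 4*t*x0 - 4*t*x0*t0 - t^2 - 2*t^2*t0 + t^2*t0^2 + 4*t^2*x0 - 2*t^2*x0^2 + 4*x*t0 - 4*x*t0^2 - 4*x*x0 + 4*x*x0*t0 + 4*x*t*t0 - 4*x*t*t0^2 - 4*x*t*x0 + 4*x*t*x0*t0 + 2*x^2 - 4*x^2*t0 + 2*x^2*t0^2) := by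
    have hm : (0:ℝ) ≤ 2*x0-1-t0 := by linarith
    have hA : (0:ℝ) ≤ (1-t)*(2*x0-1-t0) := mul_nonneg (by linarith) hm
    have hB : (0:ℝ) ≤ (1-t0)*(-(2*x)+1+t) := mul_nonneg (by linarith) (by linarith)
    have hn : (0:ℝ) ≤ 4*(1-x)*(1-t0) - (1-t)*(2*(1-x0)+(1-t0)) := by nlinarith [hA, hB]
    nlinarith [sq_nonneg ((2*x-1-t)*(1-t0)), mul_nonneg (mul_nonneg (show (0:ℝ) ≤ 1+t by linarith) hm) hn]
  have hpos : (0:ℝ) ≤ (2*t0^2 - 4*x0*t0 + 2*x0^2 - t - 2*t*t0 + 3*t*t0^2 + 4*t*x0 - 4*t*x0*t0 - t^2 - 2*t^2*t0 + t^2*t0^2 + 4*t^2*x0 - 2*t^2*x0^2 + 4*x*t0 - 4*x*t0^2 - 4*x*x0 + 4*x*x0*t0 + 4*x*t*t0 - 4*x*t*t0^2 - 4*x*t*x0 + 4*x*t*x0*t0 + 2*x^2 - 4*x^2*t0 + 2*x^2*t0^2) / ((1+t)*(1-t0)^2) := div_nonneg hN (mul_nonneg (by linarith) (by positivity))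
  linarith [key, hpos]

lemma ineq_RR (x t x0 t0 : ℝ) (ht0 : 0 ≤ t0) (ht01 : t0 < 1) (hx0 : x0 ≤ 1) (hb : 1-t0 ≤ 2*(x0-t0))
    (ht : 0 ≤ t) (ht1 : t < 1) (hx : x ≤ 1) (hc : 1-t ≤ 2*(x-t)) :
    2*(x0-1)^2/(1-t0) + 4*(x0-1) + (4*(x0-1)/(1-t0) + 4)*(x-x0) + (2*(x0-1)^2/(1-t0)^2)*(t-t0) ≤ 2*(x-1)^2/(1-t) + 4*(x-1) := by
  have key : (2*(x-1)^2/(1-t) + 4*(x-1)) - (2*(x0-1)^2/(1-t0) + 4*(x0-1) + (4*(x0-1)/(1-t0) + 4)*(x-x0) + (2*(x0-1)^2/(1-t0)^2)*(t-t0)) = (2*t0^2 - 4*x0*t0 + 2*x0^2 - 4*t*t0 + 4*t*x0 + 4*t*x0*t0 - 4*t*x0^2 + 2*t^2 - 4*t^2*x0 + 2*t^2*x0^2 + 4*x*t0 - 4*x*t0^2 - 4*x*x0 + 4*x*x0*t0 - 4*x*t + 4*x*t*t0 + 4*x*t*x0 - 4*x*t*x0*t0 + 2*x^2 - 4*x^2*t0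 + 2*x^2*t0^2) / ((1-t)*(1-t0)^2) := by
    field_simp [show (1:ℝ)-t0 ≠ 0 by linarith, show (1:ℝ)-t ≠ 0 by linarith]
    ring
  have hN : (0:ℝ) ≤ (2*t0^2 - 4*x0*t0 + 2*x0^2 - 4*t*t0 + 4*t*x0 + 4*t*x0*t0 - 4*t*x0^2 + 2*t^2 - 4*t^2*x0 + 2*t^2*x0^2 + 4*x*t0 - 4*x*t0^2 - 4*x*x0 + 4*x*x0*t0 - 4*x*t + 4*x*t*t0 + 4*x*t*x0 - 4*x*t*x0*t0 + 2*x^2 - 4*x^2*t0 + 2*x^2*t0^2) := by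
    nlinarith [sq_nonneg ((x-1)*(1-t0) - (x0-1)*(1-t))]
  have hpos : (0:ℝ) ≤ (2*t0^2 - 4*x0*t0 + 2*x0^2 - 4*t*t0 + 4*t*x0 + 4*t*x0*t0 - 4*t*x0^2 + 2*t^2 - 4*t^2*x0 + 2*t^2*x0^2 + 4*x*t0 - 4*x*t0^2 - 4*x*x0 + 4*x*x0*t0 - 4*x*t + 4*x*t*t0 + 4*x*t*x0 - 4*x*t*x0*t0 + 2*x^2 - 4*x^2*t0 + 2*x^2*t0^2) / ((1-t)*(1-t0)^2) := div_nonneg hN (mul_nonneg (by linarith) (by positivity))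
  linarith [key, hpos]

lemma convexOn_of_support (s : Set (ℝ × ℝ)) (hs : Convex ℝ s) (f : ℝ × ℝ → ℝ)
    (h : ∀ p ∈ s, ∃ a b : ℝ, ∀ q ∈ s, f p + a * (q.1 - p.1) + b * (q.2 - p.2) ≤ f q) :
    ConvexOn ℝ s f := by
  refine ⟨hs, fun p hp q hq α β hα hβ hαβ => ?_⟩
  obtain ⟨a, b, hab⟩ := h _ (hs hp hq hα hβ hαβ)
  have h1 := hab p hp
  have h2 := hab q hq
  simp only [Prod.fst_add, Prod.snd_add, Prod.smul_fst, Prod.smul_snd, smul_eq_mul] at h1 h2 ⊢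
  have e1 := mul_le_mul_of_nonneg_left h1 hα
  have e2 := mul_le_mul_of_nonneg_left h2 hβ
  have key : α * (f (α • p + β • q) + a * (p.1 - (α * p.1 + β * q.1)) +
        b * (p.2 - (α * p.2 + β * q.2)))
      + β * (f (α • p + β • q) + a * (q.1 - (α * p.1 + β * q.1)) +
        b * (q.2 - (α * p.2 + β * q.2)))
      = f (α • p + β • q) := by
    linear_combination (f (α • p + β • q) - a * (α * p.1 + β * q.1)
      - b * (α * p.2 + β * q.2)) * hαβ
  linarith

lemma geo_supp (x0 t0 : ℝ) (hx0 : x0 ∈ Set.Icc (-1:ℝ) 1) (ht0 : t0 ∈ Set.Icc (0:ℝ) 1) :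
    ∃ a b : ℝ, ∀ x t, x ∈ Set.Icc (-1:ℝ) 1 → t ∈ Set.Icc (0:ℝ) 1 →
      geo x0 t0 + a * (x - x0) + b * (t - t0) ≤ geo x t := by
  obtain ⟨hx0l, hx0r⟩ := hx0
  obtain ⟨ht0l, ht0r⟩ := ht0
  have hM : ∀ ht01 : t0 ≤ 1, (-(1+t0) ≤ 2*x0) → (2*x0 ≤ 1+t0) →
      (geo x0 t0 = 2*x0^2/(1+t0) + t0 - 2) →
      ∃ a b : ℝ, ∀ x t, x ∈ Set.Icc (-1:ℝ) 1 → t ∈ Set.Icc (0:ℝ) 1 →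
        geo x0 t0 + a * (x - x0) + b * (t - t0) ≤ geo x t := by
    intro ht01 hb1 hb2 hgeo
    refine ⟨4*x0/(1+t0), 1 - 2*x0^2/(1+t0)^2, ?_⟩
    intro x t hx ht
    rw [hgeo]
    rcases eq_or_lt_of_le ht.2 with h1 | h1
    · rw [geo_eqM x t (Or.inl h1)]
      exact ineq_MM x t x0 t0 ht0l ht01 hb1 hb2 ht.1 ht.2
        (by linarith [hx.1]) (by linarith [hx.2])
    · by_cases hcL : x + t < -(1-t)/2
      · rw [geo_eqL x t h1 hcL]
        exact ineq_ML x t x0 t0 ht0l ht01 hb1 hb2 ht.1 h1 hx.1 (by linarith)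
      · by_cases hcR : x - t > (1-t)/2
        · rw [geo_eqR x t h1 hcL hcR]
          exact ineq_MR x t x0 t0 ht0l ht01 hb1 hb2 ht.1 h1 hx.2 (by linarith)
        · rw [geo_eqM x t (Or.inr ⟨hcL, hcR⟩)]
          exact ineq_MM x t x0 t0 ht0l ht01 hb1 hb2 ht.1 ht.2
            (by linarith) (by linarith)
  rcases eq_or_lt_of_le ht0r with h0 | h0
  · exact hM ht0r (by linarith) (by linarith) (geo_eqM x0 t0 (Or.inl h0))
  · by_cases hL : x0 + t0 < -(1 - t0) / 2
    · refine ⟨4*(x0+1)/(1-t0) - 4, 2*(x0+1)^2/(1-t0)^2, ?_⟩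
      intro x t hx ht
      rw [geo_eqL x0 t0 h0 hL]
      rcases eq_or_lt_of_le ht.2 with h1 | h1
      · rw [geo_eqM x t (Or.inl h1)]
        exact ineq_LM x t x0 t0 ht0l h0 hx0l (by linarith) ht.1 ht.2
          (by linarith [hx.1]) (by linarith [hx.2])
      · by_cases hcL : x + t < -(1-t)/2
        · rw [geo_eqL x t h1 hcL]
          exact ineq_LL x t x0 t0 ht0l h0 hx0l (by linarith) ht.1 h1 hx.1 (by linarith)
        · by_cases hcR : x - t > (1-t)/2
          · rw [geo_eqR x t h1 hcL hcR]
            exact ineq_LR x t x0 t0 ht0l h0 hx0l (by linarith) ht.1 h1 hx.2 (by linarith)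
          · rw [geo_eqM x t (Or.inr ⟨hcL, hcR⟩)]
            exact ineq_LM x t x0 t0 ht0l h0 hx0l (by linarith) ht.1 ht.2
              (by linarith) (by linarith)
    · by_cases hR : x0 - t0 > (1 - t0) / 2
      · refine ⟨4*(x0-1)/(1-t0) + 4, 2*(x0-1)^2/(1-t0)^2, ?_⟩
        intro x t hx ht
        rw [geo_eqR x0 t0 h0 hL hR]
        rcases eq_or_lt_of_le ht.2 with h1 | h1
        · rw [geo_eqM x t (Or.inl h1)]
          exact ineq_RM x t x0 t0 ht0l h0 hx0r (by linarith) ht.1 ht.2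
            (by linarith [hx.1]) (by linarith [hx.2])
        · by_cases hcL : x + t < -(1-t)/2
          · rw [geo_eqL x t h1 hcL]
            exact ineq_RL x t x0 t0 ht0l h0 hx0r (by linarith) ht.1 h1 hx.1 (by linarith)
          · by_cases hcR : x - t > (1-t)/2
            · rw [geo_eqR x t h1 hcL hcR]
              exact ineq_RR x t x0 t0 ht0l h0 hx0r (by linarith) ht.1 h1 hx.2 (by linarith)
            · rw [geo_eqM x t (Or.inr ⟨hcL, hcR⟩)]
              exact ineq_RM x t x0 t0 ht0l h0 hx0r (by linarith) ht.1 ht.2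
                (by linarith) (by linarith)
      · exact hM ht0r (by linarith) (by linarith) (geo_eqM x0 t0 (Or.inr ⟨hL, hR⟩))

lemma geo_convexOn :
    ConvexOn ℝ (Set.Icc (-1 : ℝ) 1 ×ˢ Set.Icc (0 : ℝ) 1)
      (fun p : ℝ × ℝ => geo p.1 p.2) := by
  apply convexOn_of_support _ ((convex_Icc _ _).prod (convex_Icc _ _))
  rintro ⟨x0, t0⟩ hp
  obtain ⟨a, b, hab⟩ := geo_supp x0 t0 hp.1 hp.2
  exact ⟨a, b, fun q hq => hab q.1 q.2 hq.1 hq.2⟩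

lemma geo_at_zero (x : ℝ) : geo x 0 = 2 * (x ^ 2 - 1) := by
  by_cases c1 : x + 0 < -(1 - 0) / 2
  · rw [geo_eqL x 0 (by norm_num) c1]; ring
  · by_cases c2 : x - 0 > (1 - 0) / 2
    · rw [geo_eqR x 0 (by norm_num) c1 c2]; ring
    · rw [geo_eqM x 0 (Or.inr ⟨c1, c2⟩)]; ring

lemma geo_at_one (x : ℝ) : geo x 1 = x ^ 2 - 1 := by
  rw [geo, if_pos rfl]

lemma geo_left (t : ℝ) (ht : 0 ≤ t) (ht1 : t ≤ 1) : geo (-1) t = 0 := by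
  rcases eq_or_lt_of_le ht1 with h | h
  · rw [h, geo_at_one]; norm_num
  · rw [geo_eqL (-1) t h (by linarith)]; norm_num

lemma geo_right (t : ℝ) (ht : 0 ≤ t) (ht1 : t ≤ 1) : geo 1 t = 0 := by
  rcases eq_or_lt_of_le ht1 with h | h
  · rw [h, geo_at_one]; norm_num
  · rw [geo_eqR 1 t h (by intro hc; linarith) (by show (1-t)/2 < 1 - t; linarith)]
    norm_num

lemma geo_close (x t : ℝ) (hx : -1 ≤ x) (hx2 : x ≤ 1) (ht : 0 ≤ t) (ht2 : t ≤ 1) :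
    |geo x t - (x ^ 2 - 1)| ≤ 4 * (1 - t) := by
  rcases eq_or_lt_of_le ht2 with h | h
  · rw [h, geo_at_one]; norm_num
  · have hd : (0:ℝ) < 1 - t := by linarith
    rw [abs_le]
    by_cases c1 : x + t < -(1 - t) / 2
    · rw [geo_eqL x t h c1]
      have hB : (0:ℝ) ≤ (1 - t) - 2 * (x + 1) := by linarith
      constructor
      · have k2 : 2 * (x + 1) ^ 2 / (1 - t) - 4 * (x + 1) - (x ^ 2 - 1) + 4 * (1 - t)
            = (t * (x + 1) ^ 2 + 3 * (1 - t) ^ 2 + (x + t) ^ 2) / (1 - t) := by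
          field_simp
          ring
        nlinarith [k2, div_nonneg (by positivity : (0:ℝ) ≤ t * (x + 1) ^ 2 + 3 * (1 - t) ^ 2 + (x + t) ^ 2) hd.le]
      · have k2 : 4 * (1 - t) - (2 * (x + 1) ^ 2 / (1 - t) - 4 * (x + 1) - (x ^ 2 - 1))
            = (4 * (1 - t) ^ 2 + (x + 1) * (1 - t) + (x + 1) ^ 2 * (1 - t)
              + (x + 1) * ((1 - t) - 2 * (x + 1))) / (1 - t) := by
          field_simp
          ring
        have hnn : (0:ℝ) ≤ 4 * (1 - t) ^ 2 + (x + 1) * (1 - t) + (x + 1) ^ 2 * (1 - t)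
              + (x + 1) * ((1 - t) - 2 * (x + 1)) := by
          have := mul_nonneg (by linarith : (0:ℝ) ≤ x + 1) hB
          nlinarith [mul_nonneg (by linarith : (0:ℝ) ≤ x + 1) hd.le,
            mul_nonneg (sq_nonneg (x + 1)) hd.le, sq_nonneg (1 - t)]
        nlinarith [k2, div_nonneg hnn hd.le]
    · by_cases c2 : x - t > (1 - t) / 2
      · rw [geo_eqR x t h c1 c2]
        have hB : (0:ℝ) ≤ (1 - t) - 2 * (1 - x) := by
          have : (1-t)/2 < x - t := c2
          linarith
        constructor
        · have k2 : 2 * (x - 1) ^ 2 / (1 - t) + 4 * (x - 1) - (x ^ 2 - 1) + 4 * (1 - t)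
              = (t * (x - 1) ^ 2 + 3 * (1 - t) ^ 2 + (x - t) ^ 2) / (1 - t) := by
            field_simp
            ring
          nlinarith [k2, div_nonneg (by positivity : (0:ℝ) ≤ t * (x - 1) ^ 2 + 3 * (1 - t) ^ 2 + (x - t) ^ 2) hd.le]
        · have k2 : 4 * (1 - t) - (2 * (x - 1) ^ 2 / (1 - t) + 4 * (x - 1) - (x ^ 2 - 1))
              = (4 * (1 - t) ^ 2 + (1 - x) * (1 - t) + (1 - x) ^ 2 * (1 - t)
                + (1 - x) * ((1 - t) - 2 * (1 - x))) / (1 - t) := by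
            field_simp
            ring
          have hnn : (0:ℝ) ≤ 4 * (1 - t) ^ 2 + (1 - x) * (1 - t) + (1 - x) ^ 2 * (1 - t)
                + (1 - x) * ((1 - t) - 2 * (1 - x)) := by
            have := mul_nonneg (by linarith : (0:ℝ) ≤ 1 - x) hB
            nlinarith [mul_nonneg (by linarith : (0:ℝ) ≤ 1 - x) hd.le,
              mul_nonneg (sq_nonneg (1 - x)) hd.le, sq_nonneg (1 - t)]
          nlinarith [k2, div_nonneg hnn hd.le]
      · rw [geo_eqM x t (Or.inr ⟨c1, c2⟩)]
        have hs : (0:ℝ) < 1 + t := by linarith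
        constructor
        · have k2 : 2 * x ^ 2 / (1 + t) + t - 2 - (x ^ 2 - 1) + 4 * (1 - t)
              = ((1 - t) * (3 * (1 + t) + x ^ 2)) / (1 + t) := by
            field_simp
            ring
          nlinarith [k2, div_nonneg (mul_nonneg hd.le (by positivity : (0:ℝ) ≤ 3 * (1 + t) + x ^ 2)) hs.le]
        · have k2 : 4 * (1 - t) - (2 * x ^ 2 / (1 + t) + t - 2 - (x ^ 2 - 1))
              = ((1 - t) * (5 * (1 + t) - x ^ 2)) / (1 + t) := by
            field_simp
            ring
          have : (0:ℝ) ≤ 5 * (1 + t) - x ^ 2 := by nlinarith [sq_nonneg x]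
          nlinarith [k2, div_nonneg (mul_nonneg hd.le this) hs.le]

lemma geo_contOn_V :
    ContinuousOn (fun p : ℝ × ℝ => geo p.1 p.2) (Prod.snd ⁻¹' Set.Ioo (-1 : ℝ) 1) := by
  set V : Set (ℝ × ℝ) := Prod.snd ⁻¹' Set.Ioo (-1 : ℝ) 1 with hVdef
  have hmem : ∀ p : ℝ × ℝ, p ∈ V → -1 < p.2 ∧ p.2 < 1 := fun p hp => hp
  have hF1 : ContinuousOn (fun p : ℝ × ℝ => 2 * (p.1 + 1) ^ 2 / (1 - p.2) - 4 * (p.1 + 1)) V := by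
    apply ContinuousOn.sub _ (by fun_prop)
    exact ContinuousOn.div (by fun_prop) (by fun_prop)
      (fun p hp => (by linarith [(hmem p hp).2] : (0:ℝ) < 1 - p.2).ne')
  have hF2 : ContinuousOn (fun p : ℝ × ℝ => 2 * (p.1 - 1) ^ 2 / (1 - p.2) + 4 * (p.1 - 1)) V := by
    apply ContinuousOn.add _ (by fun_prop)
    exact ContinuousOn.div (by fun_prop) (by fun_prop)
      (fun p hp => (by linarith [(hmem p hp).2] : (0:ℝ) < 1 - p.2).ne')
  have hF3 : ContinuousOn (fun p : ℝ × ℝ => 2 * p.1 ^ 2 / (1 + p.2) + p.2 - 2) V := by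
    apply ContinuousOn.sub _ (by fun_prop)
    apply ContinuousOn.add _ (by fun_prop)
    exact ContinuousOn.div (by fun_prop) (by fun_prop)
      (fun p hp => (by linarith [(hmem p hp).1] : (0:ℝ) < 1 + p.2).ne')
  apply ContinuousOn.congr
    (f := fun p : ℝ × ℝ => if p.1 + p.2 < -(1 - p.2) / 2
      then 2 * (p.1 + 1) ^ 2 / (1 - p.2) - 4 * (p.1 + 1)
      else if p.1 - p.2 > (1 - p.2) / 2
        then 2 * (p.1 - 1) ^ 2 / (1 - p.2) + 4 * (p.1 - 1)
        else 2 * p.1 ^ 2 / (1 + p.2) + p.2 - 2)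
  · apply ContinuousOn.if
    · rintro ⟨x, t⟩ ⟨hV, hfr⟩
      obtain ⟨hV1, hV2⟩ := hmem _ hV
      have hline : x + t = -(1 - t) / 2 :=
        (frontier_lt_subset_eq (by fun_prop) (by fun_prop)) hfr
      dsimp only at hline hV1 hV2 ⊢
      have hx : x = -(1 + t) / 2 := by linarith
      subst hx
      rw [if_neg (by intro hc; change (1 - t) / 2 < -(1 + t) / 2 - t at hc; linarith)]
      have h1 : (1:ℝ) - t ≠ 0 := by linarith
      have h2 : (1:ℝ) + t ≠ 0 := by linarith
      field_simp [h1, h2]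
      ring
    · exact hF1.mono (fun p hp => hp.1)
    · apply ContinuousOn.if
      · rintro ⟨x, t⟩ ⟨⟨hV, _⟩, hfr⟩
        obtain ⟨hV1, hV2⟩ := hmem _ hV
        have hline : (1 - t) / 2 = x - t :=
          (frontier_lt_subset_eq (by fun_prop) (by fun_prop)) hfr
        dsimp only at hline hV1 hV2 ⊢
        have hx : x = (1 + t) / 2 := by linarith
        subst hx
        have h1 : (1:ℝ) - t ≠ 0 := by linarith
        have h2 : (1:ℝ) + t ≠ 0 := by linarith
        field_simp [h1, h2]
        ring
      · exact hF2.mono (fun p hp => hp.1.1)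
      · exact hF3.mono (fun p hp => hp.1.1)
  · intro p hp
    obtain ⟨hV1, hV2⟩ := hmem _ hp
    dsimp only
    by_cases c1 : p.1 + p.2 < -(1 - p.2) / 2
    · rw [if_pos c1, geo_eqL p.1 p.2 hV2 c1]
    · rw [if_neg c1]
      by_cases c2 : p.1 - p.2 > (1 - p.2) / 2
      · rw [if_pos c2, geo_eqR p.1 p.2 hV2 c1 c2]
      · rw [if_neg c2, geo_eqM p.1 p.2 (Or.inr ⟨c1, c2⟩)]

lemma geo_contOn :
    ContinuousOn (fun p : ℝ × ℝ => geo p.1 p.2)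
      (Set.Icc (-1 : ℝ) 1 ×ˢ Set.Icc (0 : ℝ) 1) := by
  intro p hp
  rcases eq_or_lt_of_le hp.2.2 with h | h
  · have h0 : geo p.1 p.2 = p.1 ^ 2 - 1 := by rw [h, geo_at_one]
    have T1 : Filter.Tendsto (fun q : ℝ × ℝ => q.1 ^ 2 - 1)
        (nhdsWithin p (Set.Icc (-1 : ℝ) 1 ×ˢ Set.Icc (0 : ℝ) 1)) (nhds (p.1 ^ 2 - 1)) :=
      ((Continuous.tendsto (by fun_prop) p)).mono_left nhdsWithin_le_nhds
    have T2 : Filter.Tendsto (fun q : ℝ × ℝ => geo q.1 q.2 - (q.1 ^ 2 - 1))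
        (nhdsWithin p (Set.Icc (-1 : ℝ) 1 ×ˢ Set.Icc (0 : ℝ) 1)) (nhds 0) := by
      apply squeeze_zero_norm' (a := fun q : ℝ × ℝ => 4 * (1 - q.2))
      · filter_upwards [self_mem_nhdsWithin] with q hq
        rw [Real.norm_eq_abs]
        exact geo_close q.1 q.2 hq.1.1 hq.1.2 hq.2.1 hq.2.2
      · have h5 : Filter.Tendsto (fun q : ℝ × ℝ => 4 * (1 - q.2)) (nhds p) (nhds 0) :=
          Continuous.tendsto' (by fun_prop) p 0 (by rw [← h]; ring)
        exact h5.mono_left nhdsWithin_le_nhds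
    have T3 := T1.add T2
    rw [add_zero] at T3
    have T4 : Filter.Tendsto (fun q : ℝ × ℝ => geo q.1 q.2)
        (nhdsWithin p (Set.Icc (-1 : ℝ) 1 ×ˢ Set.Icc (0 : ℝ) 1)) (nhds (p.1 ^ 2 - 1)) :=
      T3.congr (fun q => by ring)
    rw [← h0] at T4
    exact T4
  · have hmem : Prod.snd ⁻¹' Set.Ioo (-1 : ℝ) 1 ∈ nhds p :=
      IsOpen.mem_nhds (isOpen_Ioo.preimage continuous_snd)
        (Set.mem_preimage.mpr (Set.mem_Ioo.mpr ⟨by linarith [hp.2.1], h⟩))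
    exact (geo_contOn_V.continuousAt hmem).continuousWithinAt

lemma hasDerivAt_quad (p q r a : ℝ) :
    HasDerivAt (fun z : ℝ => p * z ^ 2 + q * z + r) (2 * p * a + q) a := by
  have h1 : HasDerivAt (fun z : ℝ => z ^ 2) (2 * a) a := by
    simpa using hasDerivAt_pow 2 a
  have h2 := (h1.const_mul p).add ((hasDerivAt_id a).const_mul q)
  have h3 := h2.add_const r
  exact h3.congr_deriv (by ring)

lemma hasDerivAt_inv_linear (d e K b : ℝ) (h : d + e * b ≠ 0) :
    HasDerivAt (fun z : ℝ => K / (d + e * z)) (-(K * e) / (d + e * b) ^ 2) b := by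
  have g1 : HasDerivAt (fun z : ℝ => d + e * z) e b := by
    simpa using ((hasDerivAt_id b).const_mul e).const_add d
  have g2 := (hasDerivAt_const b K).div g1 h
  exact g2.congr_deriv (by ring)

lemma hasDerivAt_inv_linear_sq (d e K b : ℝ) (h : d + e * b ≠ 0) :
    HasDerivAt (fun z : ℝ => K / (d + e * z) ^ 2) (-(2 * K * e) / (d + e * b) ^ 3) b := by
  have g0 : HasDerivAt (fun z : ℝ => d + e * z) e b := by
    simpa using ((hasDerivAt_id b).const_mul e).const_add d
  have g1 : HasDerivAt (fun z : ℝ => (d + e * z) ^ 2) (2 * (d + e * b) * e) b := by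
    have := g0.pow 2
    exact this.congr_deriv (by push_cast; ring)
  have g2 := (hasDerivAt_const b K).div g1 (pow_ne_zero 2 h)
  exact g2.congr_deriv (by field_simp; ring)

lemma hess_model (c d e A B C x t : ℝ) (hne : d + e * t ≠ 0)
    (h : ∀ᶠ q : ℝ × ℝ in nhds (x, t),
      geo q.1 q.2 = 2 * (q.1 + c) ^ 2 / (d + e * q.2) + A * q.1 + B * q.2 + C) :
    hessDet2 geo x t = 0 := by
  have h' : {q : ℝ × ℝ | geo q.1 q.2
      = 2 * (q.1 + c) ^ 2 / (d + e * q.2) + A * q.1 + B * q.2 + C} ∈ nhds (x, t) := h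
  obtain ⟨u, hu, v, hv, huv⟩ := mem_nhds_prod_iff.mp h'
  obtain ⟨u', hu'sub, hu'open, hxu'⟩ := mem_nhds_iff.mp hu
  obtain ⟨v0, hv0sub, hv0open, htv0⟩ := mem_nhds_iff.mp hv
  set v' : Set ℝ := v0 ∩ {b : ℝ | d + e * b ≠ 0} with hv'def
  have hv'open : IsOpen v' := hv0open.inter (isOpen_ne_fun (by fun_prop) continuous_const)
  have htv' : t ∈ v' := ⟨htv0, hne⟩
  have heq : ∀ a ∈ u', ∀ b ∈ v',
      geo a b = 2 * (a + c) ^ 2 / (d + e * b) + A * a + B * b + C :=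
    fun a ha b hb => huv (Set.mk_mem_prod (hu'sub ha) (hv0sub hb.1))
  have hder1 : ∀ b ∈ v', ∀ a ∈ u',
      deriv (fun z => geo z b) a = 4 * (a + c) / (d + e * b) + A := by
    intro b hb a ha
    have hK : d + e * b ≠ 0 := hb.2
    have hev : (fun z => geo z b) =ᶠ[nhds a]
        (fun z => 2 * (z + c) ^ 2 / (d + e * b) + A * z + B * b + C) :=
      Filter.eventuallyEq_of_mem (hu'open.mem_nhds ha) (fun z hz => heq z hz b hb)
    rw [hev.deriv_eq]
    rw [show (fun z : ℝ => 2 * (z + c) ^ 2 / (d + e * b) + A * z + B * b + C)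
        = (fun z : ℝ => (2 / (d + e * b)) * z ^ 2 + (4 * c / (d + e * b) + A) * z
          + (2 * c ^ 2 / (d + e * b) + B * b + C)) from funext fun z => by ring]
    rw [(hasDerivAt_quad _ _ _ a).deriv]
    field_simp
    ring
  -- u_xx
  have hD1 : deriv (fun a => deriv (fun z => geo z t) a) x = 4 / (d + e * t) := by
    have hev : (fun a => deriv (fun z => geo z t) a) =ᶠ[nhds x]
        (fun a => 4 * (a + c) / (d + e * t) + A) :=
      Filter.eventuallyEq_of_mem (hu'open.mem_nhds hxu') (fun a ha => hder1 t htv' a ha)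
    rw [hev.deriv_eq]
    rw [show (fun a : ℝ => 4 * (a + c) / (d + e * t) + A)
        = (fun a : ℝ => (0 : ℝ) * a ^ 2 + (4 / (d + e * t)) * a
          + (4 * c / (d + e * t) + A)) from funext fun z => by ring]
    rw [(hasDerivAt_quad _ _ _ x).deriv]
    ring
  -- u_xt
  have hD3 : deriv (fun a => deriv (fun z => geo z a) x) t
      = -(4 * (x + c) * e) / (d + e * t) ^ 2 := by
    have hev : (fun a => deriv (fun z => geo z a) x) =ᶠ[nhds t]
        (fun a => 4 * (x + c) / (d + e * a) + A) :=
      Filter.eventuallyEq_of_mem (hv'open.mem_nhds htv') (fun b hb => hder1 b hb x hxu')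
    rw [hev.deriv_eq]
    rw [((hasDerivAt_inv_linear d e (4 * (x + c)) t hne).add_const A).deriv]
  -- u_tt
  have hder2 : ∀ b ∈ v', deriv (fun z => geo x z) b
      = -(2 * (x + c) ^ 2 * e) / (d + e * b) ^ 2 + B := by
    intro b hb
    have hev : (fun z => geo x z) =ᶠ[nhds b]
        (fun z => 2 * (x + c) ^ 2 / (d + e * z) + A * x + B * z + C) :=
      Filter.eventuallyEq_of_mem (hv'open.mem_nhds hb) (fun z hz => heq x hxu' z hz)
    rw [hev.deriv_eq]
    rw [show (fun z : ℝ => 2 * (x + c) ^ 2 / (d + e * z) + A * x + B * z + C)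
        = (fun z : ℝ => 2 * (x + c) ^ 2 / (d + e * z) + B * id z + (A * x + C)) from
        funext fun z => by simp only [id_eq]; ring]
    refine (((hasDerivAt_inv_linear d e (2 * (x + c) ^ 2) b hb.2).add
        ((hasDerivAt_id b).const_mul B)).add_const (A * x + C)).deriv.trans ?_
    ring
  have hD2 : deriv (fun a => deriv (fun z => geo x z) a) t
      = 4 * (x + c) ^ 2 * e ^ 2 / (d + e * t) ^ 3 := by
    have hev : (fun a => deriv (fun z => geo x z) a) =ᶠ[nhds t]
        (fun a => -(2 * (x + c) ^ 2 * e) / (d + e * a) ^ 2 + B) :=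
      Filter.eventuallyEq_of_mem (hv'open.mem_nhds htv') (fun b hb => hder2 b hb)
    rw [hev.deriv_eq]
    rw [((hasDerivAt_inv_linear_sq d e (-(2 * (x + c) ^ 2 * e)) t hne).add_const B).deriv]
    field_simp
    ring
  rw [hessDet2, hD1, hD2, hD3]
  field_simp
  ring


lemma hSL_open : IsOpen {p : ℝ × ℝ | p ∈ Set.Ioo (-1 : ℝ) 1 ×ˢ Set.Ioo (0 : ℝ) 1 ∧
    p.1 + p.2 < -(1 - p.2) / 2} :=
  ((isOpen_Ioo.prod isOpen_Ioo).inter (isOpen_lt (f := fun p : ℝ × ℝ => p.1 + p.2)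
    (g := fun p : ℝ × ℝ => -(1 - p.2) / 2) (by fun_prop) (by fun_prop)))

lemma hSM_open : IsOpen {p : ℝ × ℝ | p ∈ Set.Ioo (-1 : ℝ) 1 ×ˢ Set.Ioo (0 : ℝ) 1 ∧
    |p.1| < (1 + p.2) / 2} :=
  ((isOpen_Ioo.prod isOpen_Ioo).inter (isOpen_lt (f := fun p : ℝ × ℝ => |p.1|)
    (g := fun p : ℝ × ℝ => (1 + p.2) / 2) (continuous_fst.abs) (by fun_prop)))

lemma hSR_open : IsOpen {p : ℝ × ℝ | p ∈ Set.Ioo (-1 : ℝ) 1 ×ˢ Set.Ioo (0 : ℝ) 1 ∧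
    p.1 - p.2 > (1 - p.2) / 2} :=
  ((isOpen_Ioo.prod isOpen_Ioo).inter (isOpen_lt (f := fun p : ℝ × ℝ => (1 - p.2) / 2)
    (g := fun p : ℝ × ℝ => p.1 - p.2) (by fun_prop) (by fun_prop)))

lemma contDiffOn_L : ContDiffOn ℝ (⊤ : ℕ∞) (fun p : ℝ × ℝ => geo p.1 p.2)
    {p : ℝ × ℝ | p ∈ Set.Ioo (-1 : ℝ) 1 ×ˢ Set.Ioo (0 : ℝ) 1 ∧
      p.1 + p.2 < -(1 - p.2) / 2} := by
  apply ContDiffOn.congr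
    (f := fun p : ℝ × ℝ => 2 * (p.1 + 1) ^ 2 / (1 - p.2) - 4 * (p.1 + 1))
  · apply ContDiffOn.sub
    · exact ContDiffOn.div (by fun_prop) (by fun_prop)
        (fun p hp => (by linarith [hp.1.2.2] : (0:ℝ) < 1 - p.2).ne')
    · exact (by fun_prop : ContDiff ℝ (⊤ : ℕ∞) fun p : ℝ × ℝ => 4 * (p.1 + 1)).contDiffOn
  · intro p hp
    exact geo_eqL p.1 p.2 hp.1.2.2 hp.2

lemma contDiffOn_M : ContDiffOn ℝ (⊤ : ℕ∞) (fun p : ℝ × ℝ => geo p.1 p.2)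
    {p : ℝ × ℝ | p ∈ Set.Ioo (-1 : ℝ) 1 ×ˢ Set.Ioo (0 : ℝ) 1 ∧
      |p.1| < (1 + p.2) / 2} := by
  apply ContDiffOn.congr
    (f := fun p : ℝ × ℝ => 2 * p.1 ^ 2 / (1 + p.2) + p.2 - 2)
  · apply ContDiffOn.sub
    apply ContDiffOn.add
    · exact ContDiffOn.div (by fun_prop) (by fun_prop)
        (fun p hp => (by linarith [hp.1.2.1] : (0:ℝ) < 1 + p.2).ne')
    · exact (by fun_prop : ContDiff ℝ (⊤ : ℕ∞) fun p : ℝ × ℝ => p.2).contDiffOn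
    · exact (by fun_prop : ContDiff ℝ (⊤ : ℕ∞) fun _ : ℝ × ℝ => (2:ℝ)).contDiffOn
  · intro p hp
    obtain ⟨habs1, habs2⟩ := abs_lt.mp hp.2
    exact geo_eqM p.1 p.2 (Or.inr ⟨by intro hc; linarith, by intro hc; linarith [hc]⟩)

lemma contDiffOn_R : ContDiffOn ℝ (⊤ : ℕ∞) (fun p : ℝ × ℝ => geo p.1 p.2)
    {p : ℝ × ℝ | p ∈ Set.Ioo (-1 : ℝ) 1 ×ˢ Set.Ioo (0 : ℝ) 1 ∧
      p.1 - p.2 > (1 - p.2) / 2} := by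
  apply ContDiffOn.congr
    (f := fun p : ℝ × ℝ => 2 * (p.1 - 1) ^ 2 / (1 - p.2) + 4 * (p.1 - 1))
  · apply ContDiffOn.add
    · exact ContDiffOn.div (by fun_prop) (by fun_prop)
        (fun p hp => (by linarith [hp.1.2.2] : (0:ℝ) < 1 - p.2).ne')
    · exact (by fun_prop : ContDiff ℝ (⊤ : ℕ∞) fun p : ℝ × ℝ => 4 * (p.1 - 1)).contDiffOn
  · intro p hp
    have hc1 : ¬(p.1 + p.2 < -(1 - p.2) / 2) := by
      intro hc
      have h2 : (1 - p.2) / 2 < p.1 - p.2 := hp.2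
      linarith [hp.1.2.1]
    exact geo_eqR p.1 p.2 hp.1.2.2 hc1 hp.2

lemma hess_L : ∀ p ∈ {p : ℝ × ℝ | p ∈ Set.Ioo (-1 : ℝ) 1 ×ˢ Set.Ioo (0 : ℝ) 1 ∧
    p.1 + p.2 < -(1 - p.2) / 2}, hessDet2 geo p.1 p.2 = 0 := by
  intro p hp
  apply hess_model 1 1 (-1) (-4) 0 (-4) p.1 p.2
    (by intro hc; linarith [hp.1.2.2, hc] : (1:ℝ) + (-1) * p.2 ≠ 0)
  filter_upwards [hSL_open.mem_nhds hp] with q hq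
  rw [geo_eqL q.1 q.2 hq.1.2.2 hq.2]
  rw [show (1:ℝ) + (-1) * q.2 = 1 - q.2 from by ring]
  ring

lemma hess_M : ∀ p ∈ {p : ℝ × ℝ | p ∈ Set.Ioo (-1 : ℝ) 1 ×ˢ Set.Ioo (0 : ℝ) 1 ∧
    |p.1| < (1 + p.2) / 2}, hessDet2 geo p.1 p.2 = 0 := by
  intro p hp
  apply hess_model 0 1 1 0 1 (-2) p.1 p.2
    (by intro hc; linarith [hp.1.2.1] : (1:ℝ) + 1 * p.2 ≠ 0)
  filter_upwards [hSM_open.mem_nhds hp] with q hq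
  obtain ⟨habs1, habs2⟩ := abs_lt.mp hq.2
  rw [geo_eqM q.1 q.2 (Or.inr ⟨by intro hc; linarith, by intro hc; linarith [hc]⟩)]
  rw [show (1:ℝ) + 1 * q.2 = 1 + q.2 from by ring]
  ring

lemma hess_R : ∀ p ∈ {p : ℝ × ℝ | p ∈ Set.Ioo (-1 : ℝ) 1 ×ˢ Set.Ioo (0 : ℝ) 1 ∧
    p.1 - p.2 > (1 - p.2) / 2}, hessDet2 geo p.1 p.2 = 0 := by
  intro p hp
  apply hess_model (-1) 1 (-1) 4 0 (-4) p.1 p.2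
    (by intro hc; linarith [hp.1.2.2, hc] : (1:ℝ) + (-1) * p.2 ≠ 0)
  filter_upwards [hSR_open.mem_nhds hp] with q hq
  have hc1 : ¬(q.1 + q.2 < -(1 - q.2) / 2) := by
    intro hc
    have h2 : (1 - q.2) / 2 < q.1 - q.2 := hq.2
    linarith [hq.1.2.1]
  rw [geo_eqR q.1 q.2 hq.1.2.2 hc1 hq.2]
  rw [show (1:ℝ) + (-1) * q.2 = 1 - q.2 from by ring]
  ring

/-- Example 2.1: the piecewise function `geo` is continuous and convex on
`[-1,1] × [0,1]`, attains the boundary data `u₀, u₁` and vanishes on `{±1} × [0,1]`,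
and is smooth with degenerate Hessian on each of the three open regions. -/
theorem stmt11 :
    ContinuousOn (fun p : ℝ × ℝ => geo p.1 p.2)
      (Set.Icc (-1 : ℝ) 1 ×ˢ Set.Icc (0 : ℝ) 1) ∧
    ConvexOn ℝ (Set.Icc (-1 : ℝ) 1 ×ˢ Set.Icc (0 : ℝ) 1)
      (fun p : ℝ × ℝ => geo p.1 p.2) ∧
    (∀ x ∈ Set.Icc (-1 : ℝ) 1, geo x 0 = 2 * (x ^ 2 - 1) ∧ geo x 1 = x ^ 2 - 1) ∧
    (∀ t ∈ Set.Icc (0 : ℝ) 1, geo (-1) t = 0 ∧ geo 1 t = 0) ∧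
    (ContDiffOn ℝ (⊤ : ℕ∞) (fun p : ℝ × ℝ => geo p.1 p.2)
        {p : ℝ × ℝ | p ∈ Set.Ioo (-1 : ℝ) 1 ×ˢ Set.Ioo (0 : ℝ) 1 ∧
          p.1 + p.2 < -(1 - p.2) / 2} ∧
      ∀ p ∈ {p : ℝ × ℝ | p ∈ Set.Ioo (-1 : ℝ) 1 ×ˢ Set.Ioo (0 : ℝ) 1 ∧
          p.1 + p.2 < -(1 - p.2) / 2}, hessDet2 geo p.1 p.2 = 0) ∧
    (ContDiffOn ℝ (⊤ : ℕ∞) (fun p : ℝ × ℝ => geo p.1 p.2)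
        {p : ℝ × ℝ | p ∈ Set.Ioo (-1 : ℝ) 1 ×ˢ Set.Ioo (0 : ℝ) 1 ∧
          |p.1| < (1 + p.2) / 2} ∧
      ∀ p ∈ {p : ℝ × ℝ | p ∈ Set.Ioo (-1 : ℝ) 1 ×ˢ Set.Ioo (0 : ℝ) 1 ∧
          |p.1| < (1 + p.2) / 2}, hessDet2 geo p.1 p.2 = 0) ∧
    (ContDiffOn ℝ (⊤ : ℕ∞) (fun p : ℝ × ℝ => geo p.1 p.2)
        {p : ℝ × ℝ | p ∈ Set.Ioo (-1 : ℝ) 1 ×ˢ Set.Ioo (0 : ℝ) 1 ∧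
          p.1 - p.2 > (1 - p.2) / 2} ∧
      ∀ p ∈ {p : ℝ × ℝ | p ∈ Set.Ioo (-1 : ℝ) 1 ×ˢ Set.Ioo (0 : ℝ) 1 ∧
          p.1 - p.2 > (1 - p.2) / 2}, hessDet2 geo p.1 p.2 = 0) := by
  refine ⟨geo_contOn, geo_convexOn, ?_, ?_, ⟨contDiffOn_L, hess_L⟩,
    ⟨contDiffOn_M, hess_M⟩, ⟨contDiffOn_R, hess_R⟩⟩
  · intro x _
    exact ⟨geo_at_zero x, geo_at_one x⟩
  · intro t ht
    exact ⟨geo_left t ht.1 ht.2, geo_right t ht.1 ht.2⟩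
end

section
/- Let u be the function on [−1,1] × [0,1] defined piecewise by u(x,t) = 2(1−t)·(((x+t)/(1−t))² − 1) if x + t < −(1−t)/2, u(x,t) = 2x²/(1+t) + t − 2 if |x| ≤ (1+t)/2, and u(x,t) = 2(1−t)·(((x−t)/(1−t))² − 1) if x − t > (1−t)/2 (for t < 1), with u(x,1) = x² − 1. Then for every (x,t) ∈ (−1,1) × (0,1) with x + t < −(1−t)/2 one has ∂²u/∂x²(x,t) = 4/(1−t); moreover for every t ∈ (0,1), ∂u/∂x(−(1+t)/2, t) = −2 while lim_{x→−1⁺} ∂u/∂x(x,t) = −4. Consequently the second derivative ∂²u/∂x² is unbounded on (−1,1) × (0,1). -/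
open Filter Topology Set

theorem HasDerivAt.of_eventuallyEq_Iio_Ici {F : Type*} [NormedAddCommGroup F] [NormedSpace ℝ F]
    {f g h : ℝ → F} {f' : F} {a : ℝ} (hg : HasDerivAt g f' a) (hh : HasDerivAt h f' a)
    (hgh : g a = h a) (hfg : f =ᶠ[𝓝[<] a] g) (hfh : f =ᶠ[𝓝[≥] a] h) : HasDerivAt f f' a := by
  have hfa : f a = h a := hfh.eq_of_nhdsWithin self_mem_Ici
  have hleft := hg.hasDerivWithinAt.congr_of_eventuallyEq hfg (hfa.trans hgh.symm)
  have hright := hh.hasDerivWithinAt.congr_of_eventuallyEq hfh hfa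
  rw [← hasDerivWithinAt_univ, ← Iio_union_Ici]
  exact hleft.union hright

namespace geo

variable {t : ℝ}

theorem eq_of_add_lt (ht : t < 1) {b : ℝ} (hb : b + t < -(1 - t) / 2) :
    geo b t = 2 * (b + t) ^ 2 / (1 - t) - 2 * (1 - t) := by
  have h1t : 1 - t ≠ 0 := by linarith
  rw [geo, if_neg ht.ne, if_pos hb]
  field_simp

theorem eq_of_mem_Icc (ht : t ≠ 1) {b : ℝ} (hb : b ∈ Icc (-(1 + t) / 2) ((1 + t) / 2)) :
    geo b t = 2 * b ^ 2 / (1 + t) + t - 2 := by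
  rw [geo, if_neg ht, if_neg (by linarith [hb.1]), if_neg (by linarith [hb.2])]

theorem hasDerivAt_left_parabola (t x : ℝ) :
    HasDerivAt (fun b => 2 * (b + t) ^ 2 / (1 - t) - 2 * (1 - t)) (4 * (x + t) / (1 - t)) x :=
  (((((hasDerivAt_id' x).add_const t).pow 2).const_mul 2).div_const (1 - t)
    |>.sub_const (2 * (1 - t))).congr_deriv (by ring)

theorem hasDerivAt_of_add_lt (ht : t < 1) {x : ℝ} (hx : x + t < -(1 - t) / 2) :
    HasDerivAt (fun b => geo b t) (4 * (x + t) / (1 - t)) x :=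
  (hasDerivAt_left_parabola t x).congr_of_eventuallyEq
    ((((continuous_add_const t).tendsto x).eventually (eventually_lt_nhds hx)).mono
      fun _ hb => eq_of_add_lt ht hb)

theorem deriv_eventuallyEq_of_add_lt (ht : t < 1) {x : ℝ} (hx : x + t < -(1 - t) / 2) :
    deriv (fun b => geo b t) =ᶠ[𝓝 x] fun a => 4 * (a + t) / (1 - t) :=
  (((continuous_add_const t).tendsto x).eventually (eventually_lt_nhds hx)).mono
    fun _ ha => (hasDerivAt_of_add_lt ht ha).deriv

theorem deriv_deriv_of_add_lt (ht : t < 1) {x : ℝ} (hx : x + t < -(1 - t) / 2) :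
    deriv (fun a => deriv (fun b => geo b t) a) x = 4 / (1 - t) := by
  rw [(deriv_eventuallyEq_of_add_lt ht hx).deriv_eq]
  exact ((((hasDerivAt_id' x).add_const t).const_mul 4).div_const (1 - t)).deriv.trans (by ring)

theorem hasDerivAt_interface (ht : t ∈ Ioo (-1 : ℝ) 1) :
    HasDerivAt (fun b => geo b t) (-2) (-(1 + t) / 2) := by
  obtain ⟨ht0, ht1⟩ := ht
  have h1t : 1 - t ≠ 0 := by linarith
  have h1t' : 1 + t ≠ 0 := by linarith
  have hleft := (hasDerivAt_left_parabola t (-(1 + t) / 2)).congr_deriv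
    (show 4 * (-(1 + t) / 2 + t) / (1 - t) = -2 by field_simp; ring)
  have hmiddle : HasDerivAt (fun b => 2 * b ^ 2 / (1 + t) + t - 2) (-2) (-(1 + t) / 2) := by
    refine (((((hasDerivAt_id' _).pow 2).const_mul 2).div_const (1 + t)).add_const t
      |>.sub_const 2).congr_deriv ?_
    field_simp
    ring
  refine hleft.of_eventuallyEq_Iio_Ici hmiddle ?_ ?_ ?_
  · field_simp
    ring
  · exact eventually_of_mem self_mem_nhdsWithin fun b (hb : b < -(1 + t) / 2) =>
      eq_of_add_lt ht1 (by linarith)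
  · exact eventually_of_mem (Ico_mem_nhdsGE (by linarith)) fun b hb =>
      eq_of_mem_Icc ht1.ne (Ico_subset_Icc_self hb)

theorem tendsto_deriv_nhds_neg_one (ht : t < 1) :
    Tendsto (fun x => deriv (fun b => geo b t) x) (𝓝 (-1)) (𝓝 (-4)) := by
  have h1t : 1 - t ≠ 0 := by linarith
  have hlin : Tendsto (fun a : ℝ => 4 * (a + t) / (1 - t)) (𝓝 (-1))
      (𝓝 (4 * (-1 + t) / (1 - t))) :=
    ((continuous_const.mul (continuous_id.add continuous_const)).div_const _).tendsto _
  rw [show (4 : ℝ) * (-1 + t) / (1 - t) = -4 by field_simp; ring] at hlin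
  exact hlin.congr' (deriv_eventuallyEq_of_add_lt ht (by linarith)).symm

end geo

/-- Example 2.1, quantified failure of global `C^{1,1}` regularity:
`∂²u/∂x² = 4/(1-t)` on the left region, `∂u/∂x(-(1+t)/2, t) = -2` while
`∂u/∂x → -4` as `x → -1⁺`, and consequently `∂²u/∂x²` is unbounded
on `(-1,1) × (0,1)`. -/
theorem stmt12 :
    (∀ x t : ℝ, (x, t) ∈ Set.Ioo (-1 : ℝ) 1 ×ˢ Set.Ioo (0 : ℝ) 1 →
      x + t < -(1 - t) / 2 →
      deriv (fun a => deriv (fun b => geo b t) a) x = 4 / (1 - t)) ∧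
    (∀ t ∈ Set.Ioo (0 : ℝ) 1, deriv (fun b => geo b t) (-(1 + t) / 2) = -2) ∧
    (∀ t ∈ Set.Ioo (0 : ℝ) 1,
      Filter.Tendsto (fun x => deriv (fun b => geo b t) x)
        (nhdsWithin (-1) (Set.Ioi (-1 : ℝ))) (nhds (-4))) ∧
    ∀ M : ℝ, ∃ x t : ℝ, (x, t) ∈ Set.Ioo (-1 : ℝ) 1 ×ˢ Set.Ioo (0 : ℝ) 1 ∧
      M < |deriv (fun a => deriv (fun b => geo b t) a) x| := by
  refine ⟨fun x t hxt hx => geo.deriv_deriv_of_add_lt hxt.2.2 hx,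
    fun t ht => (geo.hasDerivAt_interface ⟨by linarith [ht.1], ht.2⟩).deriv,
    fun t ht => (geo.tendsto_deriv_nhds_neg_one ht.2).mono_left nhdsWithin_le_nhds, fun M => ?_⟩
  -- `4/(1 - t) = 4(|M| + 2) > M`, and `x = -(3 + t)/4` lies in the left region.
  set t : ℝ := 1 - 1 / (|M| + 2) with ht
  have hMt : 1 - t = 1 / (|M| + 2) := by rw [ht]; ring
  have hpos : 0 < 1 / (|M| + 2) := by positivity
  have hsmall : 1 / (|M| + 2) < 1 := (div_lt_one (by positivity)).2 (by linarith [abs_nonneg M])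
  refine ⟨-(3 + t) / 4, t, ⟨⟨by linarith, by linarith⟩, ⟨by linarith, by linarith⟩⟩, ?_⟩
  rw [geo.deriv_deriv_of_add_lt (by linarith) (by linarith), hMt, div_div_eq_mul_div, div_one,
    abs_of_pos (by positivity)]
  linarith [le_abs_self M, abs_nonneg M]
end

section
/- Let U ⊆ ℝⁿ be open and convex, let φ₀, φ₁ : U → ℝ be continuously differentiable, let W ⊆ ℝⁿ × (0,1) be open, and let ξ, η : W → U be differentiable maps satisfying for all (x,t) ∈ W: (1−t)·ξ(x,t) + t·η(x,t) = x and ∇φ₀(ξ(x,t)) = ∇φ₁(η(x,t)). Define u : W → ℝ by u(x,t) = (1−t)·φ₀(ξ(x,t)) + t·φ₁(η(x,t)). Then u is differentiable on W with spatial gradient ∇ₓu(x,t) = ∇φ₀(ξ(x,t)) = ∇φ₁(η(x,t)) and time derivative ∂ₜu(x,t) = φ₁(η(x,t)) − φ₀(ξ(x,t)) + ⟨∇φ₀(ξ(x,t)), ξ(x,t) − η(x,t)⟩. -/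
/-!
Differentiating the constraint `(1 - t) ξ + t η = x` gives `(1 - t) Dξ + t Dη = (dx, dt (ξ - η))`.
Since `∇φ₀(ξ) = ∇φ₁(η)` is a single linear form `L`, the chain-rule terms
`(1 - t) L ∘ Dξ + t L ∘ Dη` of `Du` are `L` applied to this combination, so the unknown
derivatives of `ξ` and `η` drop out and `Du = L dx + (φ₁(η) - φ₀(ξ) + L (ξ - η)) dt`.
-/

open scoped Matrix

open scoped Topology

lemma ContinuousLinearMap.apply_eq_dotProduct {n : ℕ} (F : (Fin n → ℝ) →L[ℝ] ℝ)
    (v : Fin n → ℝ) : F v = (fun i => F (Pi.single i 1)) ⬝ᵥ v := by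
  conv_lhs => rw [← Finset.univ_sum_single v]
  simp only [map_sum, dotProduct]
  refine Finset.sum_congr rfl fun i _ => ?_
  rw [mul_comm, ← smul_eq_mul (v i), ← map_smul, ← Pi.single_smul', smul_eq_mul, mul_one]

lemma fderiv_apply_eq_grad_dotProduct {n : ℕ} (φ : (Fin n → ℝ) → ℝ) (x v : Fin n → ℝ) :
    fderiv ℝ φ x v = grad φ x ⬝ᵥ v :=
  (fderiv ℝ φ x).apply_eq_dotProduct v

lemma fderiv_eq_of_grad_eq {n : ℕ} {φ ψ : (Fin n → ℝ) → ℝ} {x y : Fin n → ℝ}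
    (h : grad φ x = grad ψ y) : fderiv ℝ φ x = fderiv ℝ ψ y := by
  ext1 v
  rw [fderiv_apply_eq_grad_dotProduct, fderiv_apply_eq_grad_dotProduct, h]

section Interpolation

variable {E : Type*} [NormedAddCommGroup E] [NormedSpace ℝ E]
  {ξ η : E × ℝ → E} {p : E × ℝ}

lemma hasFDerivAt_one_sub_snd (p : E × ℝ) :
    HasFDerivAt (fun q : E × ℝ => 1 - q.2) (-ContinuousLinearMap.snd ℝ E ℝ) p := by
  have h := (hasFDerivAt_const (1 : ℝ) p).sub (hasFDerivAt_snd (𝕜 := ℝ) (p := p))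
  rwa [zero_sub] at h

lemma fderiv_segment_constraint_apply {ξ' η' : E × ℝ →L[ℝ] E}
    (hξ : HasFDerivAt ξ ξ' p) (hη : HasFDerivAt η η' p)
    (hseg : ∀ᶠ q in 𝓝 p, (1 - q.2) • ξ q + q.2 • η q = q.1) (w : E × ℝ) :
    (1 - p.2) • ξ' w + p.2 • η' w = w.1 + w.2 • (ξ p - η p) := by
  have hcomb := ((hasFDerivAt_one_sub_snd p).smul hξ).add (hasFDerivAt_snd.smul hη)
  have hD := congrArg (· w) (hcomb.unique (hasFDerivAt_fst.congr_of_eventuallyEq hseg))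
  simp only [add_apply, smul_apply, neg_apply, ContinuousLinearMap.smulRight_apply,
    ContinuousLinearMap.coe_snd', ContinuousLinearMap.coe_fst'] at hD
  rw [← hD]
  module

lemma hasFDerivAt_segment_interpolation {φ₀ φ₁ : E → ℝ} {L : E →L[ℝ] ℝ}
    (hφ₀ : HasFDerivAt φ₀ L (ξ p)) (hφ₁ : HasFDerivAt φ₁ L (η p))
    (hξ : DifferentiableAt ℝ ξ p) (hη : DifferentiableAt ℝ η p)
    (hseg : ∀ᶠ q in 𝓝 p, (1 - q.2) • ξ q + q.2 • η q = q.1) :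
    HasFDerivAt (fun q => (1 - q.2) * φ₀ (ξ q) + q.2 * φ₁ (η q))
      (L ∘L ContinuousLinearMap.fst ℝ E ℝ +
        (ContinuousLinearMap.snd ℝ E ℝ).smulRight (φ₁ (η p) - φ₀ (ξ p) + L (ξ p - η p))) p := by
  have hu := ((hasFDerivAt_one_sub_snd p).mul (hφ₀.comp p hξ.hasFDerivAt)).add
    (hasFDerivAt_snd.mul (hφ₁.comp p hη.hasFDerivAt))
  refine hu.congr_fderiv (ContinuousLinearMap.ext fun w => ?_)
  have hL := congrArg L (fderiv_segment_constraint_apply hξ.hasFDerivAt hη.hasFDerivAt hseg w)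
  simp only [map_add, map_smul, smul_eq_mul] at hL
  simp only [add_apply, smul_apply, neg_apply, ContinuousLinearMap.comp_apply,
    ContinuousLinearMap.smulRight_apply, ContinuousLinearMap.coe_snd',
    ContinuousLinearMap.coe_fst', smul_eq_mul, Function.comp_apply]
  linear_combination hL

end Interpolation

theorem stmt19_general (n : ℕ) (U : Set (Fin n → ℝ)) (hUo : IsOpen U)
    (φ₀ φ₁ : (Fin n → ℝ) → ℝ)
    (hφ₀ : ContDiffOn ℝ 1 φ₀ U) (hφ₁ : ContDiffOn ℝ 1 φ₁ U)
    (W : Set ((Fin n → ℝ) × ℝ)) (hWo : IsOpen W)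
    (ξ η : (Fin n → ℝ) × ℝ → Fin n → ℝ)
    (hξU : ∀ p ∈ W, ξ p ∈ U) (hηU : ∀ p ∈ W, η p ∈ U)
    (hξd : ∀ p ∈ W, DifferentiableAt ℝ ξ p)
    (hηd : ∀ p ∈ W, DifferentiableAt ℝ η p)
    (hseg : ∀ p ∈ W, (1 - p.2) • ξ p + p.2 • η p = p.1)
    (hgrad : ∀ p ∈ W, grad φ₀ (ξ p) = grad φ₁ (η p))
    (u : (Fin n → ℝ) × ℝ → ℝ)
    (hu : ∀ p : (Fin n → ℝ) × ℝ, u p = (1 - p.2) * φ₀ (ξ p) + p.2 * φ₁ (η p)) :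
    ∀ p ∈ W,
      DifferentiableAt ℝ u p ∧
      grad (fun y => u (y, p.2)) p.1 = grad φ₀ (ξ p) ∧
      grad (fun y => u (y, p.2)) p.1 = grad φ₁ (η p) ∧
      deriv (fun s => u (p.1, s)) p.2 =
        φ₁ (η p) - φ₀ (ξ p) + grad φ₀ (ξ p) ⬝ᵥ (ξ p - η p) := by
  intro p hp
  have hφ₀' := ((hφ₀.differentiableOn one_ne_zero).differentiableAt
    (hUo.mem_nhds (hξU p hp))).hasFDerivAt
  have hφ₁' := ((hφ₁.differentiableOn one_ne_zero).differentiableAt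
    (hUo.mem_nhds (hηU p hp))).hasFDerivAt
  rw [← fderiv_eq_of_grad_eq (hgrad p hp)] at hφ₁'
  have hDu := hasFDerivAt_segment_interpolation hφ₀' hφ₁' (hξd p hp) (hηd p hp)
    (Filter.eventually_of_mem (hWo.mem_nhds hp) hseg)
  rw [← funext hu] at hDu
  have hx : HasFDerivAt (fun y => u (y, p.2)) _ p.1 :=
    hDu.comp p.1 (hasFDerivAt_prodMk_left (𝕜 := ℝ) p.1 p.2)
  have ht : HasDerivAt (fun s => u (p.1, s)) _ p.2 :=
    hDu.comp_hasDerivAt p.2 ((hasDerivAt_const p.2 p.1).prodMk (hasDerivAt_id p.2))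
  have hspace : grad (fun y => u (y, p.2)) p.1 = grad φ₀ (ξ p) := by
    funext i
    simp [grad, hx.fderiv]
  refine ⟨hDu.differentiableAt, hspace, hspace.trans (hgrad p hp), ?_⟩
  simp [ht.deriv, fderiv_apply_eq_grad_dotProduct]

/-- First-order derivatives of the weak geodesic
`u(x,t) = (1-t)φ₀(ξ(x,t)) + tφ₁(η(x,t))` built from the affine segments:
the spatial gradient is `∇φ₀(ξ(x,t)) = ∇φ₁(η(x,t))` and the time derivative is
`φ₁(η) - φ₀(ξ) + ⟨∇φ₀(ξ), ξ - η⟩`. -/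
theorem stmt19 (n : ℕ) (U : Set (Fin n → ℝ)) (hUo : IsOpen U) (hUc : Convex ℝ U)
    (φ₀ φ₁ : (Fin n → ℝ) → ℝ)
    (hφ₀ : ContDiffOn ℝ 1 φ₀ U) (hφ₁ : ContDiffOn ℝ 1 φ₁ U)
    (W : Set ((Fin n → ℝ) × ℝ)) (hWo : IsOpen W)
    (hWt : ∀ p ∈ W, p.2 ∈ Set.Ioo (0 : ℝ) 1)
    (ξ η : (Fin n → ℝ) × ℝ → Fin n → ℝ)
    (hξU : ∀ p ∈ W, ξ p ∈ U) (hηU : ∀ p ∈ W, η p ∈ U)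
    (hξd : ∀ p ∈ W, DifferentiableAt ℝ ξ p)
    (hηd : ∀ p ∈ W, DifferentiableAt ℝ η p)
    (hseg : ∀ p ∈ W, (1 - p.2) • ξ p + p.2 • η p = p.1)
    (hgrad : ∀ p ∈ W, grad φ₀ (ξ p) = grad φ₁ (η p))
    (u : (Fin n → ℝ) × ℝ → ℝ)
    (hu : ∀ p : (Fin n → ℝ) × ℝ, u p = (1 - p.2) * φ₀ (ξ p) + p.2 * φ₁ (η p)) :
    ∀ p ∈ W,
      DifferentiableAt ℝ u p ∧
      grad (fun y => u (y, p.2)) p.1 = grad φ₀ (ξ p) ∧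
      grad (fun y => u (y, p.2)) p.1 = grad φ₁ (η p) ∧
      deriv (fun s => u (p.1, s)) p.2 =
        φ₁ (η p) - φ₀ (ξ p) + grad φ₀ (ξ p) ⬝ᵥ (ξ p - η p) :=
  stmt19_general n U hUo φ₀ φ₁ hφ₀ hφ₁ W hWo ξ η hξU hηU hξd hηd hseg hgrad u hu
end
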